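/- arXiv:1811.01295 — 13 statements merged into one kernel-verified Lean document; each statement's English description precedes it below -/
import Mathlib

section
/- For every natural number n ≥ 2, the polynomial P_{2n}(x) = x^(2n) − x^(n+1) − x^n − x^(n−1) + 1 has a real root in the open interval (2^(1/n), 3^(1/n)). In particular, P_{2n}(2^(1/n)) < 0 and P_{2n}(3^(1/n)) > 0. -/
/-- `P_{2n}(x) = x^{2n} - x^{n+1} - x^n - x^{n-1} + 1` has a real root in
`(2^{1/n}, 3^{1/n})`; in particular `P_{2n}(2^{1/n}) < 0` and `P_{2n}(3^{1/n}) > 0`. -/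
theorem P2n_has_root_in_Ioo (n : ℕ) (hn : 2 ≤ n) :
    (∃ x ∈ Set.Ioo ((2 : ℝ) ^ ((1 : ℝ) / (n : ℝ))) ((3 : ℝ) ^ ((1 : ℝ) / (n : ℝ))),
      x ^ (2 * n) - x ^ (n + 1) - x ^ n - x ^ (n - 1) + 1 = 0) ∧
    (((2 : ℝ) ^ ((1 : ℝ) / (n : ℝ))) ^ (2 * n) - ((2 : ℝ) ^ ((1 : ℝ) / (n : ℝ))) ^ (n + 1)
      - ((2 : ℝ) ^ ((1 : ℝ) / (n : ℝ))) ^ n - ((2 : ℝ) ^ ((1 : ℝ) / (n : ℝ))) ^ (n - 1) + 1 < 0) ∧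
    (0 < ((3 : ℝ) ^ ((1 : ℝ) / (n : ℝ))) ^ (2 * n) - ((3 : ℝ) ^ ((1 : ℝ) / (n : ℝ))) ^ (n + 1)
      - ((3 : ℝ) ^ ((1 : ℝ) / (n : ℝ))) ^ n - ((3 : ℝ) ^ ((1 : ℝ) / (n : ℝ))) ^ (n - 1) + 1) := by
  have hn0 : (n : ℝ) ≠ 0 := by
    have : 0 < n := by omega
    exact_mod_cast this.ne'
  have hpos : (0 : ℝ) < 1 / (n : ℝ) := by
    have : (0 : ℝ) < (n : ℝ) := by positivity
    positivity
  set a : ℝ := (2 : ℝ) ^ ((1 : ℝ) / (n : ℝ)) with ha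
  set b : ℝ := (3 : ℝ) ^ ((1 : ℝ) / (n : ℝ)) with hb
  have han : a ^ n = 2 := by
    rw [ha, ← Real.rpow_natCast (_ ^ _) n, ← Real.rpow_mul (by norm_num), one_div,
      inv_mul_cancel₀ hn0, Real.rpow_one]
  have hbn : b ^ n = 3 := by
    rw [hb, ← Real.rpow_natCast (_ ^ _) n, ← Real.rpow_mul (by norm_num), one_div,
      inv_mul_cancel₀ hn0, Real.rpow_one]
  have ha0 : 0 < a := by rw [ha]; positivity
  have hb0 : 0 < b := by rw [hb]; positivity
  have ha1 : 1 < a := by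
    rw [ha, Real.one_lt_rpow_iff_of_pos (by norm_num)]
    exact Or.inl ⟨by norm_num, hpos⟩
  have hb1 : 1 < b := by
    rw [hb, Real.one_lt_rpow_iff_of_pos (by norm_num)]
    exact Or.inl ⟨by norm_num, hpos⟩
  have hab : a < b := Real.rpow_lt_rpow (by norm_num) (by norm_num) hpos
  have hb2 : b ^ 2 ≤ 3 := hbn ▸ pow_le_pow_right₀ hb1.le hn
  -- expand the values
  have key : ∀ x : ℝ, 0 < x → x ^ (2 * n) - x ^ (n + 1) - x ^ n - x ^ (n - 1) + 1
      = (x ^ n) ^ 2 - x ^ n * x - x ^ n - x ^ n / x + 1 := by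
    intro x hx
    have h1 : x ^ (2 * n) = (x ^ n) ^ 2 := by rw [two_mul, pow_add, sq]
    have h2 : x ^ (n + 1) = x ^ n * x := by rw [pow_succ]
    have h3 : x ^ (n - 1) = x ^ n / x := by
      rw [eq_div_iff hx.ne', ← pow_succ]
      congr 1
      omega
    rw [h1, h2, h3]
  have hfa : a ^ (2 * n) - a ^ (n + 1) - a ^ n - a ^ (n - 1) + 1 < 0 := by
    rw [key a ha0, han]
    have h : 3 - 2 * a < 2 / a := by
      rw [lt_div_iff₀ ha0]
      nlinarith [sq_nonneg (4 * a - 3)]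
    linarith
  have hfb : 0 < b ^ (2 * n) - b ^ (n + 1) - b ^ n - b ^ (n - 1) + 1 := by
    rw [key b hb0, hbn]
    have h := mul_nonneg (sub_nonneg.2 hb1.le) (sub_nonneg.2 hb2)
    have h2 := mul_nonneg hb0.le (sq_nonneg (b - 2))
    have hq : 3 * b ^ 2 - 7 * b + 3 < 0 := by nlinarith
    have h3 : 3 / b < 7 - 3 * b := by
      rw [div_lt_iff₀ hb0]
      nlinarith
    linarith
  refine ⟨?_, hfa, hfb⟩
  have hcont : ContinuousOn (fun x : ℝ => x ^ (2 * n) - x ^ (n + 1) - x ^ n - x ^ (n - 1) + 1)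
      (Set.Icc a b) := by fun_prop
  have := intermediate_value_Ioo hab.le hcont
  have h0 : (0:ℝ) ∈ Set.Ioo
      (a ^ (2 * n) - a ^ (n + 1) - a ^ n - a ^ (n - 1) + 1)
      (b ^ (2 * n) - b ^ (n + 1) - b ^ n - b ^ (n - 1) + 1) := ⟨hfa, hfb⟩
  obtain ⟨x, hx, hfx⟩ := this h0
  exact ⟨x, hx, hfx⟩
end

section
/- For every natural number n ≥ 2, the polynomial P_{2n}(x) = x^(2n) − x^(n+1) − x^n − x^(n−1) + 1 has exactly one real root α_n in the open interval (2^(1/n), 3^(1/n)), and every complex root z of P_{2n} satisfies |z| ≤ α_n. In other words, the house of P_{2n} equals α_n. -/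
/-! Since `P_{2n}` is palindromic, `P_{2n}(z) = z^n (J(z^n) - J(z) - 1)` for the Joukowski map
`J(w) = w + w⁻¹`. On `[2^{1/n}, ∞)` the real function `t ↦ J(t^n) - J(t) - 1` is strictly
increasing, negative at `2^{1/n}` and positive at `3^{1/n}`; this gives the unique real root `α`.
If a complex root had modulus `r > α`, monotonicity would give `J(r) + 1 < J(r^n)`. Now `J` maps
the circle `|w| = r^n` onto the ellipse with semi-axes `r^n ± r^{-n}`, and `J(z) + 1` with
`|z| = r` lies strictly inside it: its horizontal reach is at most `J(r) + 1`, and since `r ≤ r^n`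
the image of the smaller circle is no flatter. This contradicts `J(z^n) = J(z) + 1`. -/

section Reduced

variable {K : Type*} [Field K]

def reducedP (n : ℕ) (t : K) : K := t ^ n + (t ^ n)⁻¹ - (t + 1 + t⁻¹)

lemma P2n_eq_pow_mul_reducedP {n : ℕ} (hn : n ≠ 0) {z : K} (hz : z ≠ 0) :
    z ^ (2 * n) - z ^ (n + 1) - z ^ n - z ^ (n - 1) + 1 = z ^ n * reducedP n z := by
  obtain ⟨k, rfl⟩ := Nat.exists_eq_add_one_of_ne_zero hn
  simp only [reducedP, Nat.add_sub_cancel]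
  field_simp
  ring

lemma P2n_eq_zero_iff {n : ℕ} (hn : n ≠ 0) {z : K} (hz : z ≠ 0) :
    z ^ (2 * n) - z ^ (n + 1) - z ^ n - z ^ (n - 1) + 1 = 0 ↔ reducedP n z = 0 := by
  rw [P2n_eq_pow_mul_reducedP hn hz, mul_eq_zero, or_iff_right (pow_ne_zero n hz)]

end Reduced

lemma two_mul_sub_le_pow_sub_pow {n : ℕ} (hn : 2 ≤ n) {s t : ℝ} (hs : 1 ≤ s) (hst : s ≤ t) :
    2 * (t - s) ≤ t ^ n - s ^ n := by
  obtain ⟨m, rfl⟩ := Nat.exists_eq_add_of_le' hn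
  have hm : s ^ m ≤ t ^ m := pow_le_pow_left₀ (by linarith) hst m
  have hm1 : 1 ≤ s ^ m := one_le_pow₀ hs
  calc 2 * (t - s) ≤ s ^ m * ((t + s) * (t - s)) := by
        nlinarith [mul_nonneg (sub_nonneg.2 hm1) (sub_nonneg.2 hst)]
    _ ≤ t ^ m * t ^ 2 - s ^ m * s ^ 2 := by nlinarith [sq_nonneg t]
    _ = t ^ (m + 2) - s ^ (m + 2) := by ring

lemma reducedP_strictMonoOn {n : ℕ} (hn : 2 ≤ n) {a : ℝ} (ha1 : 1 ≤ a) (ha : 2 ≤ a ^ n) :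
    StrictMonoOn (reducedP n) (Set.Ici a) := by
  intro s hs t _ hst
  have hs1 : 1 ≤ s := ha1.trans hs
  have hsn : 2 ≤ s ^ n := ha.trans (pow_le_pow_left₀ (by linarith) hs n)
  have htn : s ^ n < t ^ n := pow_lt_pow_left₀ hst (by linarith) (by omega)
  have hpow := two_mul_sub_le_pow_sub_pow hn hs1 hst.le
  have hJ : ∀ x y : ℝ, 0 < x → 0 < y → x + x⁻¹ - (y + y⁻¹) = (x - y) * (1 - (x * y)⁻¹) := by
    intro x y hx hy
    field_simp
    ring
  have hbig : 3 / 4 ≤ 1 - (t ^ n * s ^ n)⁻¹ := by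
    have : (t ^ n * s ^ n)⁻¹ ≤ 4⁻¹ := inv_anti₀ (by norm_num) (by nlinarith)
    linarith
  have hsmall : 1 - (t * s)⁻¹ ≤ 1 := by
    have : 0 < (t * s)⁻¹ := inv_pos.2 (by nlinarith)
    linarith
  have key : (t - s) * (1 - (t * s)⁻¹) < (t ^ n - s ^ n) * (1 - (t ^ n * s ^ n)⁻¹) := by
    nlinarith
  have h1 := hJ (t ^ n) (s ^ n) (by linarith) (by linarith)
  have h2 := hJ t s (by linarith) (by linarith)
  simp only [reducedP]
  linarith

lemma exists_mem_Ioo_reducedP_eq_zero {n : ℕ} (hn : 2 ≤ n) {a b : ℝ} (ha0 : 0 ≤ a) (hb0 : 0 ≤ b)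
    (ha : a ^ n = 2) (hb : b ^ n = 3) : ∃ α ∈ Set.Ioo a b, reducedP n α = 0 := by
  have hn0 : n ≠ 0 := by omega
  have ha1 : 1 < a := (one_lt_pow_iff_of_nonneg ha0 hn0).1 (by rw [ha]; norm_num)
  have hb1 : 1 < b := (one_lt_pow_iff_of_nonneg hb0 hn0).1 (by rw [hb]; norm_num)
  have hab : a < b := (pow_lt_pow_iff_left₀ ha0 hb0 hn0).1 (by rw [ha, hb]; norm_num)
  have hb2 : b ^ 2 ≤ 3 := hb ▸ pow_le_pow_right₀ hb1.le hn
  have hcont : ContinuousOn (reducedP n) (Set.Icc a b) := by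
    refine continuousOn_of_forall_continuousAt fun x hx ↦ ?_
    have hx0 : x ≠ 0 := (one_pos.trans (ha1.trans_le hx.1)).ne'
    unfold reducedP
    fun_prop (disch := simp [hx0])
  have hfa : reducedP n a < 0 := by
    rw [reducedP, ha]
    have : 2 ≤ a + a⁻¹ := by
      rw [← sub_nonneg]
      have : a + a⁻¹ - 2 = (a - 1) ^ 2 / a := by field_simp; ring
      rw [this]; positivity
    linarith
  have hfb : 0 < reducedP n b := by
    rw [reducedP, hb]
    have : b + b⁻¹ < 7 / 3 := by
      rw [← sub_pos]
      have : 7 / 3 - (b + b⁻¹) = (7 * b - 3 * b ^ 2 - 3) / (3 * b) := by field_simp; ring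
      rw [this]
      apply div_pos _ (by positivity)
      nlinarith
    linarith
  exact intermediate_value_Ioo hab.le hcont ⟨hfa, hfb⟩

/-- `ellipseForm p ζ = (p ^ 2 - p⁻¹ ^ 2) ^ 2` is the ellipse with semi-axes `p + p⁻¹`, `p - p⁻¹`,
onto which `w ↦ w + w⁻¹` maps the circle `‖w‖ = p`. -/
noncomputable def ellipseForm (p : ℝ) (ζ : ℂ) : ℝ :=
  (p - p⁻¹) ^ 2 * ζ.re ^ 2 + (p + p⁻¹) ^ 2 * ζ.im ^ 2

lemma ellipseForm_add_inv {w : ℂ} (hw : w ≠ 0) :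
    ellipseForm ‖w‖ (w + w⁻¹) = (‖w‖ ^ 2 - ‖w‖⁻¹ ^ 2) ^ 2 := by
  have hp : ‖w‖ ≠ 0 := norm_ne_zero_iff.mpr hw
  have hxy : w.re ^ 2 + w.im ^ 2 = ‖w‖ ^ 2 := by
    rw [← Complex.normSq_eq_norm_sq, Complex.normSq_apply]; ring
  simp only [ellipseForm, Complex.add_re, Complex.add_im, Complex.inv_re, Complex.inv_im,
    Complex.normSq_eq_norm_sq]
  field_simp
  linear_combination (‖w‖ ^ 2 - 1) ^ 2 * (‖w‖ ^ 2 + 1) ^ 2 * hxy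

lemma ellipseForm_add_one_add_inv_lt {z : ℂ} {p : ℝ} (hr : 1 ≤ ‖z‖) (hrp : ‖z‖ ≤ p)
    (hlt : ‖z‖ + 1 + ‖z‖⁻¹ < p + p⁻¹) :
    ellipseForm p (z + 1 + z⁻¹) < (p ^ 2 - p⁻¹ ^ 2) ^ 2 := by
  set r := ‖z‖
  have hr0 : 0 < r := one_pos.trans_le hr
  have hp1 : 1 < p := by
    by_contra! hp
    have hp1 : p = 1 := le_antisymm hp (hr.trans hrp)
    have hr1 : r = 1 := le_antisymm (hrp.trans hp) hr
    rw [hp1, hr1] at hlt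
    norm_num at hlt
  have hp0 : 0 < p := one_pos.trans hp1
  have hns : Complex.normSq z = r ^ 2 := Complex.normSq_eq_norm_sq z
  have hxy : z.re ^ 2 + z.im ^ 2 = r ^ 2 := by rw [← hns, Complex.normSq_apply]; ring
  have hx : z.re ≤ r := Complex.re_le_norm z
  set s := 1 + r⁻¹ ^ 2 with hs
  have hre : (z + 1 + z⁻¹).re = s * z.re + 1 := by
    simp only [Complex.add_re, Complex.inv_re, Complex.one_re, hns, hs]
    field_simp
    ring
  have him : (z + 1 + z⁻¹).im = (1 - r⁻¹ ^ 2) * z.im := by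
    simp only [Complex.add_im, Complex.inv_im, Complex.one_im, hns]
    field_simp
    ring
  have hcoef : (p + p⁻¹) * (1 - r⁻¹ ^ 2) ≤ (p - p⁻¹) * s := by
    have : p * r⁻¹ ^ 2 - p⁻¹ = (p ^ 2 - r ^ 2) / (p * r ^ 2) := by field_simp
    have : 0 ≤ p * r⁻¹ ^ 2 - p⁻¹ := by
      rw [this]
      exact div_nonneg (by nlinarith) (by positivity)
    linarith
  have hcoef0 : 0 ≤ (p + p⁻¹) * (1 - r⁻¹ ^ 2) := by
    have : r⁻¹ ^ 2 ≤ 1 := pow_le_one₀ (by positivity) (inv_le_one_of_one_le₀ hr)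
    exact mul_nonneg (by positivity) (by linarith)
  have hshift : (s * z.re + 1) ^ 2 + (s * z.im) ^ 2 ≤ (r + 1 + r⁻¹) ^ 2 := by
    have hsr : s * r = r + r⁻¹ := by rw [hs]; field_simp
    have hexp : (s * z.re + 1) ^ 2 + (s * z.im) ^ 2 = (s * r + 1) ^ 2 - 2 * s * (r - z.re) := by
      linear_combination s ^ 2 * hxy
    have : 0 ≤ s * (r - z.re) := mul_nonneg (by positivity) (sub_nonneg.2 hx)
    rw [hexp, hsr, add_right_comm]
    linarith
  calc ellipseForm p (z + 1 + z⁻¹)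
      = (p - p⁻¹) ^ 2 * (s * z.re + 1) ^ 2 + ((p + p⁻¹) * (1 - r⁻¹ ^ 2)) ^ 2 * z.im ^ 2 := by
        rw [ellipseForm, hre, him]; ring
    _ ≤ (p - p⁻¹) ^ 2 * ((s * z.re + 1) ^ 2 + (s * z.im) ^ 2) := by
        have := mul_le_mul_of_nonneg_right (pow_le_pow_left₀ hcoef0 hcoef 2) (sq_nonneg z.im)
        linear_combination this
    _ ≤ (p - p⁻¹) ^ 2 * (r + 1 + r⁻¹) ^ 2 := by gcongr
    _ < (p - p⁻¹) ^ 2 * (p + p⁻¹) ^ 2 := by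
        have : p⁻¹ < p := (inv_lt_one_of_one_lt₀ hp1).trans hp1
        gcongr
    _ = (p ^ 2 - p⁻¹ ^ 2) ^ 2 := by ring

lemma norm_le_of_reducedP_eq_zero {n : ℕ} (hn : 2 ≤ n) {a α : ℝ} (ha1 : 1 ≤ a)
    (ha : 2 ≤ a ^ n) (haα : a ≤ α) (hα : reducedP n α = 0) {z : ℂ} (hz : reducedP n z = 0) :
    ‖z‖ ≤ α := by
  by_contra! hαz
  have hr1 : 1 ≤ ‖z‖ := by linarith
  have hz0 : z ≠ 0 := norm_pos_iff.1 (by linarith)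
  have hJ : z ^ n + (z ^ n)⁻¹ = z + 1 + z⁻¹ := sub_eq_zero.1 hz
  have hgap : ‖z‖ + 1 + ‖z‖⁻¹ < ‖z‖ ^ n + (‖z‖ ^ n)⁻¹ := by
    have := reducedP_strictMonoOn hn ha1 ha haα (haα.trans hαz.le) hαz
    rw [hα, reducedP] at this
    linarith
  have hon := ellipseForm_add_inv (pow_ne_zero n hz0)
  have hinside := ellipseForm_add_one_add_inv_lt hr1 (le_self_pow₀ hr1 (by omega)) hgap
  rw [norm_pow, hJ] at hon
  exact hinside.ne hon

/-- `P_{2n}` has exactly one real root `α_n` in `(2^{1/n}, 3^{1/n})`, and every complex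
root `z` of `P_{2n}` satisfies `|z| ≤ α_n`: the house of `P_{2n}` equals `α_n`. -/
theorem P2n_house_eq_real_root (n : ℕ) (hn : 2 ≤ n) :
    ∃ α : ℝ, α ∈ Set.Ioo ((2 : ℝ) ^ ((1 : ℝ) / (n : ℝ))) ((3 : ℝ) ^ ((1 : ℝ) / (n : ℝ))) ∧
      α ^ (2 * n) - α ^ (n + 1) - α ^ n - α ^ (n - 1) + 1 = 0 ∧
      (∀ β ∈ Set.Ioo ((2 : ℝ) ^ ((1 : ℝ) / (n : ℝ))) ((3 : ℝ) ^ ((1 : ℝ) / (n : ℝ))),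
        β ^ (2 * n) - β ^ (n + 1) - β ^ n - β ^ (n - 1) + 1 = 0 → β = α) ∧
      (∀ z : ℂ, z ^ (2 * n) - z ^ (n + 1) - z ^ n - z ^ (n - 1) + 1 = 0 →
        ‖z‖ ≤ α) := by
  have hn0 : n ≠ 0 := by omega
  set a := (2 : ℝ) ^ ((1 : ℝ) / (n : ℝ))
  set b := (3 : ℝ) ^ ((1 : ℝ) / (n : ℝ))
  have ha0 : 0 ≤ a := by positivity
  have hb0 : 0 ≤ b := by positivity
  have ha : a ^ n = 2 := by
    simp only [a, one_div]; exact Real.rpow_inv_natCast_pow (by norm_num) hn0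
  have hb : b ^ n = 3 := by
    simp only [b, one_div]; exact Real.rpow_inv_natCast_pow (by norm_num) hn0
  have ha1 : 1 ≤ a := (one_le_pow_iff_of_nonneg ha0 hn0).1 (by rw [ha]; norm_num)
  obtain ⟨α, hα, hα0⟩ := exists_mem_Ioo_reducedP_eq_zero hn ha0 hb0 ha hb
  have hαpos : 0 < α := ha0.trans_lt hα.1
  refine ⟨α, hα, (P2n_eq_zero_iff hn0 hαpos.ne').2 hα0, fun β hβ hPβ ↦ ?_, fun z hz ↦ ?_⟩
  · have hβ0 : reducedP n β = 0 := (P2n_eq_zero_iff hn0 (ha0.trans_lt hβ.1).ne').1 hPβ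
    exact (reducedP_strictMonoOn hn ha1 ha.ge).injOn hβ.1.le hα.1.le (hβ0.trans hα0.symm)
  · rcases eq_or_ne z 0 with rfl | hz0
    · simpa using hαpos.le
    · exact norm_le_of_reducedP_eq_zero hn ha1 ha.ge hα.1.le hα0
        ((P2n_eq_zero_iff hn0 hz0).1 hz)
end

section
/- Let n ≥ 2 be a natural number and let z be a complex root of P_{2n}(x) = x^(2n) − x^(n+1) − x^n − x^(n−1) + 1. Write z = r·(cos φ + i sin φ) with r = |z| > 0 and φ real. If r ≠ 1, then [ (r − 1/r)·sin φ / (r^n − r^(−n)) ]^2 + [ ((r + 1/r)·cos φ + 1) / (r^n + r^(−n)) ]^2 = 1. -/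
/-- A non-unimodular root `z = r(cos φ + i sin φ)` of `P_{2n}` lies on the curve
`[(r - 1/r) sin φ / (rⁿ - r⁻ⁿ)]² + [((r + 1/r) cos φ + 1) / (rⁿ + r⁻ⁿ)]² = 1`. -/
theorem P2n_root_polar_curve (n : ℕ) (hn : 2 ≤ n) (r φ : ℝ) (hr : 0 < r) (hr1 : r ≠ 1)
    (z : ℂ) (hz : z = (r : ℂ) * ((Real.cos φ : ℂ) + (Real.sin φ : ℂ) * Complex.I))
    (hroot : z ^ (2 * n) - z ^ (n + 1) - z ^ n - z ^ (n - 1) + 1 = 0) :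
    ((r - 1 / r) * Real.sin φ / (r ^ n - 1 / r ^ n)) ^ 2
      + (((r + 1 / r) * Real.cos φ + 1) / (r ^ n + 1 / r ^ n)) ^ 2 = 1 := by
  have hrC : (r : ℂ) ≠ 0 := by exact_mod_cast hr.ne'
  have hzr : z = (r : ℂ) * Complex.exp ((φ : ℂ) * Complex.I) := by
    rw [hz, Complex.exp_mul_I, ← Complex.ofReal_cos, ← Complex.ofReal_sin]
  have hz0 : z ≠ 0 := by
    rw [hzr]; exact mul_ne_zero hrC (Complex.exp_ne_zero _)
  have hA : z ^ n ≠ 0 := pow_ne_zero _ hz0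
  have h1 : z ^ (2 * n) = z ^ n * z ^ n := by rw [two_mul, pow_add]
  have h2 : z ^ (n + 1) = z ^ n * z := pow_succ z n
  have h3 : z ^ (n - 1) * z = z ^ n := by
    rw [← pow_succ]; congr 1; omega
  rw [h1, h2] at hroot
  have key2 : z ^ n * z ^ n * z + z = z ^ n * (z * z + 1 + z) := by
    linear_combination z * hroot + h3
  have key : z ^ n + (z ^ n)⁻¹ = z + z⁻¹ + 1 := by
    field_simp
    linear_combination key2
  have e1 : z ^ n = ((r ^ n : ℝ) : ℂ) * Complex.exp (((n * φ : ℝ) : ℂ) * Complex.I) := by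
    rw [hzr, mul_pow, ← Complex.exp_nat_mul]
    push_cast
    ring_nf
  have e2 : (z ^ n)⁻¹ = ((1 / r ^ n : ℝ) : ℂ) * Complex.exp (((-(n * φ) : ℝ) : ℂ) * Complex.I) := by
    rw [e1, mul_inv, ← Complex.exp_neg]
    push_cast
    rw [div_eq_mul_inv, one_mul]
    ring_nf
  have e3 : z⁻¹ = ((1 / r : ℝ) : ℂ) * Complex.exp (((-φ : ℝ) : ℂ) * Complex.I) := by
    rw [hzr, mul_inv, ← Complex.exp_neg]
    push_cast
    rw [div_eq_mul_inv, one_mul]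
    ring_nf
  rw [e2, e1, e3, hzr] at key
  have hre := congrArg Complex.re key
  have him := congrArg Complex.im key
  simp only [Complex.add_re, Complex.add_im, Complex.mul_re, Complex.mul_im,
    Complex.ofReal_re, Complex.ofReal_im, Complex.one_re, Complex.one_im,
    Complex.exp_ofReal_mul_I_re, Complex.exp_ofReal_mul_I_im,
    zero_mul, mul_zero, sub_zero, zero_add, add_zero,
    Real.cos_neg, Real.sin_neg] at hre him
  have hre' : (r ^ n + 1 / r ^ n) * Real.cos (n * φ) = (r + 1 / r) * Real.cos φ + 1 := by
    ring_nf
    ring_nf at hre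
    linarith [hre]
  have him' : (r ^ n - 1 / r ^ n) * Real.sin (n * φ) = (r - 1 / r) * Real.sin φ := by
    ring_nf
    ring_nf at him
    linarith [him]
  have hrn : (0:ℝ) < r ^ n := pow_pos hr n
  have hd2 : r ^ n + 1 / r ^ n ≠ 0 := by positivity
  have hd1 : r ^ n - 1 / r ^ n ≠ 0 := by
    have hne1 : r ^ n ≠ 1 := by
      rcases lt_or_gt_of_ne hr1 with h | h
      · exact ne_of_lt (pow_lt_one₀ hr.le h (by omega))
      · exact ne_of_gt (one_lt_pow₀ h (by omega))
    intro hc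
    apply hne1
    have : r ^ n * r ^ n = 1 := by
      field_simp at hc
      nlinarith [hc]
    nlinarith [hrn]
  have q1 : (r - 1 / r) * Real.sin φ / (r ^ n - 1 / r ^ n) = Real.sin (n * φ) := by
    rw [← him', mul_comm, mul_div_assoc, div_self hd1, mul_one]
  have q2 : ((r + 1 / r) * Real.cos φ + 1) / (r ^ n + 1 / r ^ n) = Real.cos (n * φ) := by
    rw [← hre', mul_comm, mul_div_assoc, div_self hd2, mul_one]
  rw [q1, q2]
  exact Real.sin_sq_add_cos_sq _
end

section
/- For every natural number n ≥ 1 and every real number r, the identity (2n−1)r^(8n+3) + (2n+1)r^(8n+1) − (8n−2)r^(6n+3) − (8n+2)r^(6n+1) + 12n·r^(4n+3) + 12n·r^(4n+1) − (8n+2)r^(2n+3) − (8n−2)r^(2n+1) + (2n+1)r^3 + (2n−1)r = r·(r^(2n) − 1)^3 · ( (2n−1)(r^(2n+2) − 1) + (2n+1)·r^2·(r^(2n−2) − 1) ) holds. Consequently, for every real r > 1 the left-hand side B(r) is strictly positive. -/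
theorem pow_eq_aux (r : ℝ) (a b : ℕ) (h : a = b) : r ^ a = r ^ b := by rw [h]

/-- The factorization of `B(r)` and its positivity for `r > 1`. -/
theorem B_factorization_and_pos (n : ℕ) (hn : 1 ≤ n) :
    (∀ r : ℝ,
      (2 * (n : ℝ) - 1) * r ^ (8 * n + 3) + (2 * (n : ℝ) + 1) * r ^ (8 * n + 1)
        - (8 * (n : ℝ) - 2) * r ^ (6 * n + 3) - (8 * (n : ℝ) + 2) * r ^ (6 * n + 1)
        + 12 * (n : ℝ) * r ^ (4 * n + 3) + 12 * (n : ℝ) * r ^ (4 * n + 1)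
        - (8 * (n : ℝ) + 2) * r ^ (2 * n + 3) - (8 * (n : ℝ) - 2) * r ^ (2 * n + 1)
        + (2 * (n : ℝ) + 1) * r ^ 3 + (2 * (n : ℝ) - 1) * r
      = r * (r ^ (2 * n) - 1) ^ 3 *
          ((2 * (n : ℝ) - 1) * (r ^ (2 * n + 2) - 1)
            + (2 * (n : ℝ) + 1) * r ^ 2 * (r ^ (2 * n - 2) - 1))) ∧
    (∀ r : ℝ, 1 < r →
      0 < (2 * (n : ℝ) - 1) * r ^ (8 * n + 3) + (2 * (n : ℝ) + 1) * r ^ (8 * n + 1)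
        - (8 * (n : ℝ) - 2) * r ^ (6 * n + 3) - (8 * (n : ℝ) + 2) * r ^ (6 * n + 1)
        + 12 * (n : ℝ) * r ^ (4 * n + 3) + 12 * (n : ℝ) * r ^ (4 * n + 1)
        - (8 * (n : ℝ) + 2) * r ^ (2 * n + 3) - (8 * (n : ℝ) - 2) * r ^ (2 * n + 1)
        + (2 * (n : ℝ) + 1) * r ^ 3 + (2 * (n : ℝ) - 1) * r) := by
  have key : ∀ r : ℝ,
      (2 * (n : ℝ) - 1) * r ^ (8 * n + 3) + (2 * (n : ℝ) + 1) * r ^ (8 * n + 1)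
        - (8 * (n : ℝ) - 2) * r ^ (6 * n + 3) - (8 * (n : ℝ) + 2) * r ^ (6 * n + 1)
        + 12 * (n : ℝ) * r ^ (4 * n + 3) + 12 * (n : ℝ) * r ^ (4 * n + 1)
        - (8 * (n : ℝ) + 2) * r ^ (2 * n + 3) - (8 * (n : ℝ) - 2) * r ^ (2 * n + 1)
        + (2 * (n : ℝ) + 1) * r ^ 3 + (2 * (n : ℝ) - 1) * r
      = r * (r ^ (2 * n) - 1) ^ 3 *
          ((2 * (n : ℝ) - 1) * (r ^ (2 * n + 2) - 1)
            + (2 * (n : ℝ) + 1) * r ^ 2 * (r ^ (2 * n - 2) - 1)) := by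
    intro r
    have e1 : r ^ (8 * n + 3) = (r ^ n) ^ 8 * r ^ 3 := by
      rw [← pow_mul, ← pow_add]; exact pow_eq_aux r _ _ (by omega)
    have e2 : r ^ (8 * n + 1) = (r ^ n) ^ 8 * r ^ 1 := by
      rw [← pow_mul, ← pow_add]; exact pow_eq_aux r _ _ (by omega)
    have e3 : r ^ (6 * n + 3) = (r ^ n) ^ 6 * r ^ 3 := by
      rw [← pow_mul, ← pow_add]; exact pow_eq_aux r _ _ (by omega)
    have e4 : r ^ (6 * n + 1) = (r ^ n) ^ 6 * r ^ 1 := by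
      rw [← pow_mul, ← pow_add]; exact pow_eq_aux r _ _ (by omega)
    have e5 : r ^ (4 * n + 3) = (r ^ n) ^ 4 * r ^ 3 := by
      rw [← pow_mul, ← pow_add]; exact pow_eq_aux r _ _ (by omega)
    have e6 : r ^ (4 * n + 1) = (r ^ n) ^ 4 * r ^ 1 := by
      rw [← pow_mul, ← pow_add]; exact pow_eq_aux r _ _ (by omega)
    have e7 : r ^ (2 * n + 3) = (r ^ n) ^ 2 * r ^ 3 := by
      rw [← pow_mul, ← pow_add]; exact pow_eq_aux r _ _ (by omega)
    have e8 : r ^ (2 * n + 1) = (r ^ n) ^ 2 * r ^ 1 := by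
      rw [← pow_mul, ← pow_add]; exact pow_eq_aux r _ _ (by omega)
    have e9 : r ^ (2 * n) = (r ^ n) ^ 2 := by
      rw [← pow_mul]; exact pow_eq_aux r _ _ (by omega)
    have e10 : r ^ (2 * n + 2) = (r ^ n) ^ 2 * r ^ 2 := by
      rw [← pow_mul, ← pow_add]; exact pow_eq_aux r _ _ (by omega)
    have e11 : r ^ 2 * r ^ (2 * n - 2) = (r ^ n) ^ 2 := by
      rw [← pow_add, ← pow_mul]; exact pow_eq_aux r _ _ (by omega)
    rw [e1, e2, e3, e4, e5, e6, e7, e8, e9, e10]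
    linear_combination -((r ^ n) ^ 2 - 1) ^ 3 * (2 * (n : ℝ) + 1) * r * e11
  refine ⟨key, fun r hr => ?_⟩
  rw [key r]
  have hr0 : (0 : ℝ) < r := lt_trans one_pos hr
  have h1 : (1 : ℝ) < r ^ (2 * n) := one_lt_pow₀ hr (by omega)
  have h2 : (1 : ℝ) < r ^ (2 * n + 2) := one_lt_pow₀ hr (by omega)
  have h3 : (1 : ℝ) ≤ r ^ (2 * n - 2) := one_le_pow₀ hr.le
  have hn' : (1 : ℝ) ≤ (n : ℝ) := by exact_mod_cast hn
  have t1 : 0 < (2 * (n : ℝ) - 1) * (r ^ (2 * n + 2) - 1) :=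
    mul_pos (by linarith) (by linarith)
  have t2 : 0 ≤ (2 * (n : ℝ) + 1) * r ^ 2 * (r ^ (2 * n - 2) - 1) :=
    mul_nonneg (mul_nonneg (by linarith) (sq_nonneg r)) (by linarith)
  exact mul_pos (mul_pos hr0 (pow_pos (by linarith) 3)) (by linarith)
end

section
/- For all natural numbers n ≥ 2 and k with 5 ≤ k ≤ 4n, the inequality n·C(4n, k) > (2n−1)·C(3n+1, k) + (2n+1)·C(3n−1, k) holds, where C(m, k) denotes the binomial coefficient (with C(m, k) = 0 when k > m). -/
lemma bk_base (n : ℕ) (hn : 2 ≤ n) :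
    (2 * n - 1) * Nat.choose (3 * n + 1) 5 + (2 * n + 1) * Nat.choose (3 * n - 1) 5
      < n * Nat.choose (4 * n) 5 := by
  obtain ⟨m, rfl⟩ : ∃ m, n = m + 2 := ⟨n - 2, by omega⟩
  have key : ∀ M : ℕ, (120 : ℕ) * Nat.choose M 5 = Nat.descFactorial M 5 := by
    intro M
    rw [Nat.descFactorial_eq_factorial_mul_choose]
    norm_num [Nat.factorial]
  have h1 : 3 * (m + 2) + 1 = 3 * m + 7 := by ring
  have h2 : 3 * (m + 2) - 1 = 3 * m + 5 := by omega
  have h3 : 4 * (m + 2) = 4 * m + 8 := by ring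
  rw [h1, h2, h3]
  have e1 := key (3 * m + 7)
  have e2 := key (3 * m + 5)
  have e3 := key (4 * m + 8)
  simp only [Nat.descFactorial_succ, Nat.descFactorial_zero] at e1 e2 e3
  have hmul : (120 : ℕ) * ((2 * (m + 2) - 1) * Nat.choose (3 * m + 7) 5 +
      (2 * (m + 2) + 1) * Nat.choose (3 * m + 5) 5)
      < 120 * ((m + 2) * Nat.choose (4 * m + 8) 5) := by
    have s1 : 2 * (m + 2) - 1 = 2 * m + 3 := by omega
    rw [s1]
    have E1 : 120 * Nat.choose (3 * m + 7) 5
        = (3*m+7)*((3*m+6)*((3*m+5)*((3*m+4)*(3*m+3)))) := by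
      rw [e1]
      simp only [show 3*m+7-4 = 3*m+3 from by omega, show 3*m+7-3 = 3*m+4 from by omega,
        show 3*m+7-2 = 3*m+5 from by omega, show 3*m+7-1 = 3*m+6 from by omega,
        show 3*m+7-0 = 3*m+7 from by omega]
      ring
    have E2 : 120 * Nat.choose (3 * m + 5) 5
        = (3*m+5)*((3*m+4)*((3*m+3)*((3*m+2)*(3*m+1)))) := by
      rw [e2]
      simp only [show 3*m+5-4 = 3*m+1 from by omega, show 3*m+5-3 = 3*m+2 from by omega,
        show 3*m+5-2 = 3*m+3 from by omega, show 3*m+5-1 = 3*m+4 from by omega,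
        show 3*m+5-0 = 3*m+5 from by omega]
      ring
    have E3 : 120 * Nat.choose (4 * m + 8) 5
        = (4*m+8)*((4*m+7)*((4*m+6)*((4*m+5)*(4*m+4)))) := by
      rw [e3]
      simp only [show 4*m+8-4 = 4*m+4 from by omega, show 4*m+8-3 = 4*m+5 from by omega,
        show 4*m+8-2 = 4*m+6 from by omega, show 4*m+8-1 = 4*m+7 from by omega,
        show 4*m+8-0 = 4*m+8 from by omega]
      ring
    have expand : (m+2) * ((4*m+8)*((4*m+7)*((4*m+6)*((4*m+5)*(4*m+4)))))
        = ((2*m+3) * ((3*m+7)*((3*m+6)*((3*m+5)*((3*m+4)*(3*m+3)))))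
          + (2*m+5) * ((3*m+5)*((3*m+4)*((3*m+3)*((3*m+2)*(3*m+1))))))
          + (5280+20096*m+29998*m^2+22040*m^3+8110*m^4+1304*m^5+52*m^6) := by ring
    calc 120 * ((2 * m + 3) * Nat.choose (3 * m + 7) 5 +
          (2 * (m + 2) + 1) * Nat.choose (3 * m + 5) 5)
        = (2*m+3) * (120 * Nat.choose (3 * m + 7) 5)
          + (2*m+5) * (120 * Nat.choose (3 * m + 5) 5) := by ring
      _ = (2*m+3) * ((3*m+7)*((3*m+6)*((3*m+5)*((3*m+4)*(3*m+3)))))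
          + (2*m+5) * ((3*m+5)*((3*m+4)*((3*m+3)*((3*m+2)*(3*m+1))))) := by
          rw [E1, E2]
      _ < (m+2) * ((4*m+8)*((4*m+7)*((4*m+6)*((4*m+5)*(4*m+4))))) := by
          rw [expand]
          exact Nat.lt_add_of_pos_right (Nat.lt_of_lt_of_le (by norm_num) (Nat.le.intro rfl))
      _ = 120 * ((m + 2) * Nat.choose (4 * m + 8) 5) := by rw [← E3]; ring
  exact Nat.lt_of_mul_lt_mul_left hmul

/-- Positivity of `b_k = n·C(4n,k) − (2n−1)·C(3n+1,k) − (2n+1)·C(3n−1,k)` for `5 ≤ k ≤ 4n`. -/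
theorem bk_pos (n k : ℕ) (hn : 2 ≤ n) (hk : 5 ≤ k) (hk' : k ≤ 4 * n) :
    (2 * n - 1) * Nat.choose (3 * n + 1) k + (2 * n + 1) * Nat.choose (3 * n - 1) k
      < n * Nat.choose (4 * n) k := by
  induction k, hk using Nat.le_induction with
  | base => exact bk_base n hn
  | succ k hk5 ih =>
    have hk4 : k < 4 * n := by omega
    have IH := ih (by omega)
    have hpos : 0 < 4 * n - k := by omega
    -- multiply by (k+1)
    have key : ((2 * n - 1) * Nat.choose (3 * n + 1) (k + 1)
        + (2 * n + 1) * Nat.choose (3 * n - 1) (k + 1)) * (k + 1)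
        < (n * Nat.choose (4 * n) (k + 1)) * (k + 1) := by
      have r1 : Nat.choose (3 * n + 1) (k + 1) * (k + 1)
          = Nat.choose (3 * n + 1) k * (3 * n + 1 - k) := Nat.choose_succ_right_eq _ _
      have r2 : Nat.choose (3 * n - 1) (k + 1) * (k + 1)
          = Nat.choose (3 * n - 1) k * (3 * n - 1 - k) := Nat.choose_succ_right_eq _ _
      have r3 : Nat.choose (4 * n) (k + 1) * (k + 1)
          = Nat.choose (4 * n) k * (4 * n - k) := Nat.choose_succ_right_eq _ _
      calc ((2 * n - 1) * Nat.choose (3 * n + 1) (k + 1)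
            + (2 * n + 1) * Nat.choose (3 * n - 1) (k + 1)) * (k + 1)
          = (2 * n - 1) * (Nat.choose (3 * n + 1) (k + 1) * (k + 1))
            + (2 * n + 1) * (Nat.choose (3 * n - 1) (k + 1) * (k + 1)) := by ring
        _ = (2 * n - 1) * (Nat.choose (3 * n + 1) k * (3 * n + 1 - k))
            + (2 * n + 1) * (Nat.choose (3 * n - 1) k * (3 * n - 1 - k)) := by rw [r1, r2]
        _ ≤ (2 * n - 1) * (Nat.choose (3 * n + 1) k * (4 * n - k))
            + (2 * n + 1) * (Nat.choose (3 * n - 1) k * (4 * n - k)) := by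
            gcongr <;> omega
        _ = ((2 * n - 1) * Nat.choose (3 * n + 1) k
            + (2 * n + 1) * Nat.choose (3 * n - 1) k) * (4 * n - k) := by ring
        _ < (n * Nat.choose (4 * n) k) * (4 * n - k) := by
            exact Nat.mul_lt_mul_of_lt_of_le IH (le_refl _) hpos
        _ = n * (Nat.choose (4 * n) k * (4 * n - k)) := by ring
        _ = n * (Nat.choose (4 * n) (k + 1) * (k + 1)) := by rw [r3]
        _ = (n * Nat.choose (4 * n) (k + 1)) * (k + 1) := by ring
    exact Nat.lt_of_mul_lt_mul_right key
end

section
/- For every natural number n ≥ 2, the identity n·C(4n, 5) − (2n−1)·C(3n+1, 5) − (2n+1)·C(3n−1, 5) = (n−1)·(26n^5 + 366n^4 − 539n^3 − 39n^2 + 240n − 60)/60 holds (as an equality of rational numbers), and this quantity is strictly positive. -/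
lemma choose5_cast (m : ℕ) : ((m + 5).choose 5 : ℚ) =
    ((m : ℚ) + 1) * ((m : ℚ) + 2) * ((m : ℚ) + 3) * ((m : ℚ) + 4) * ((m : ℚ) + 5) / 120 := by
  rw [Nat.choose_eq_descFactorial_div_factorial,
    Nat.cast_div (Nat.factorial_dvd_descFactorial _ _) (by norm_num [Nat.factorial])]
  simp [Nat.descFactorial, Nat.factorial]
  ring

/-- The base case `k = 5`: `b₅ = (n−1)(26n⁵ + 366n⁴ − 539n³ − 39n² + 240n − 60)/60 > 0`. -/
theorem b5_formula_and_pos (n : ℕ) (hn : 2 ≤ n) :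
    ((n : ℚ) * Nat.choose (4 * n) 5 - (2 * (n : ℚ) - 1) * Nat.choose (3 * n + 1) 5
        - (2 * (n : ℚ) + 1) * Nat.choose (3 * n - 1) 5
      = ((n : ℚ) - 1) * (26 * (n : ℚ) ^ 5 + 366 * (n : ℚ) ^ 4 - 539 * (n : ℚ) ^ 3
          - 39 * (n : ℚ) ^ 2 + 240 * (n : ℚ) - 60) / 60) ∧
    0 < ((n : ℚ) - 1) * (26 * (n : ℚ) ^ 5 + 366 * (n : ℚ) ^ 4 - 539 * (n : ℚ) ^ 3
          - 39 * (n : ℚ) ^ 2 + 240 * (n : ℚ) - 60) / 60 := by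
  obtain ⟨k, rfl⟩ : ∃ k, n = k + 2 := ⟨n - 2, by omega⟩
  have h1 : 4 * (k + 2) = (4 * k + 3) + 5 := by ring
  have h2 : 3 * (k + 2) + 1 = (3 * k + 2) + 5 := by ring
  have h3 : 3 * (k + 2) - 1 = k * 3 + 5 := by omega
  rw [h1, h2, h3, choose5_cast, choose5_cast, choose5_cast]
  constructor
  · push_cast
    ring
  · push_cast
    have hk : (0:ℚ) ≤ (k : ℚ) := by positivity
    have h5 : (0:ℚ) ≤ (k : ℚ)^5 := by positivity
    nlinarith [pow_nonneg hk 2, pow_nonneg hk 3, pow_nonneg hk 4, pow_nonneg hk 5,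
      mul_nonneg hk (pow_nonneg hk 4)]
end

section
/- For every natural number n ≥ 2 and every real number r > 1, one has A(r) = n·r^(8n) − (2n−1)·r^(6n+2) − (2n+1)·r^(6n−2) + 6n·r^(4n) − (2n+1)·r^(2n+2) − (2n−1)·r^(2n−2) + n > 0. -/
lemma aux_sum (x : ℝ) (n : ℕ) :
    (n : ℝ) * x ^ (n - 1) ≤ ∑ k ∈ Finset.range n, (x ^ 2) ^ k := by
  have hrefl := Finset.sum_range_reflect (fun k => (x ^ 2) ^ k) n
  have h : ∑ k ∈ Finset.range n, (x ^ k - x ^ (n - 1 - k)) ^ 2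
      = 2 * (∑ k ∈ Finset.range n, (x ^ 2) ^ k) - 2 * n * x ^ (n - 1) := by
    have step : ∑ k ∈ Finset.range n, (x ^ k - x ^ (n - 1 - k)) ^ 2
        = ∑ k ∈ Finset.range n, ((x ^ 2) ^ k + (x ^ 2) ^ (n - 1 - k) - 2 * x ^ (n - 1)) := by
      refine Finset.sum_congr rfl fun k hk => ?_
      have hk' := Finset.mem_range.mp hk
      have h1 : x ^ k * x ^ (n - 1 - k) = x ^ (n - 1) := by
        rw [← pow_add]; congr 1; omega
      have h2 : (x ^ 2) ^ k = (x ^ k) ^ 2 := by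
        rw [← pow_mul, ← pow_mul, Nat.mul_comm]
      have h3 : (x ^ 2) ^ (n - 1 - k) = (x ^ (n - 1 - k)) ^ 2 := by
        rw [← pow_mul, ← pow_mul, Nat.mul_comm]
      rw [h2, h3, ← h1]; ring
    rw [step, Finset.sum_sub_distrib, Finset.sum_add_distrib, hrefl, Finset.sum_const,
      Finset.card_range, nsmul_eq_mul]
    ring
  have hnn : 0 ≤ ∑ k ∈ Finset.range n, (x ^ k - x ^ (n - 1 - k)) ^ 2 :=
    Finset.sum_nonneg fun k _ => sq_nonneg _
  linarith

/-- Positivity of `A(r)` for `r > 1`. -/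
theorem A_pos (n : ℕ) (hn : 2 ≤ n) (r : ℝ) (hr : 1 < r) :
    0 < (n : ℝ) * r ^ (8 * n) - (2 * (n : ℝ) - 1) * r ^ (6 * n + 2)
      - (2 * (n : ℝ) + 1) * r ^ (6 * n - 2) + 6 * (n : ℝ) * r ^ (4 * n)
      - (2 * (n : ℝ) + 1) * r ^ (2 * n + 2) - (2 * (n : ℝ) - 1) * r ^ (2 * n - 2)
      + (n : ℝ) := by
  obtain ⟨m, rfl⟩ : ∃ m, n = m + 2 := ⟨n - 2, by omega⟩
  have hr0 : (0 : ℝ) < r := by linarith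
  -- geometric sum with base r^4
  have hgeom : (∑ k ∈ Finset.range (m + 2), (r ^ 4) ^ k) * (r ^ 4 - 1)
      = (r ^ 4) ^ (m + 2) - 1 := geom_sum_mul (r ^ 4) (m + 2)
  have hsum : ((m : ℝ) + 2) * r ^ (2 * m + 2) ≤ ∑ k ∈ Finset.range (m + 2), (r ^ 4) ^ k := by
    have := aux_sum (r ^ 2) (m + 2)
    have e1 : ((r : ℝ) ^ 2) ^ 2 = r ^ 4 := by ring
    have e2 : ((r : ℝ) ^ 2) ^ (m + 2 - 1) = r ^ (2 * m + 2) := by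
      rw [← pow_mul]; congr 1 <;> omega
    rw [e1, e2] at this
    push_cast at this ⊢
    linarith
  -- the bracket is nonneg
  have hx4 : (0 : ℝ) < r ^ 4 - 1 := by
    have : (1 : ℝ) < r ^ 4 := one_lt_pow₀ hr (by norm_num)
    linarith
  have hbr : 0 ≤ (r ^ (4 * m + 8) - 1) - ((m : ℝ) + 2) * r ^ (2 * m + 2) * (r ^ 4 - 1) := by
    have h := mul_le_mul_of_nonneg_right hsum (le_of_lt hx4)
    rw [hgeom] at h
    have e3 : ((r : ℝ) ^ 4) ^ (m + 2) = r ^ (4 * m + 8) := by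
      rw [← pow_mul]; congr 1 <;> omega
    rw [e3] at h
    linarith
  -- positivity pieces
  have hQ : 0 < (r ^ (2 * m + 6) - 1) * (r ^ (2 * m + 2) - 1) := by
    have h1 : (1 : ℝ) < r ^ (2 * m + 6) := one_lt_pow₀ hr (by omega)
    have h2 : (1 : ℝ) < r ^ (2 * m + 2) := one_lt_pow₀ hr (by omega)
    exact mul_pos (by linarith) (by linarith)
  have hterm1 : 0 < ((m : ℝ) + 2) * ((r ^ (2 * m + 6) - 1) * (r ^ (2 * m + 2) - 1)) ^ 2 :=
    mul_pos (by positivity) (pow_pos hQ 2)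
  have hterm2 : 0 ≤ (r ^ 4 - 1) * r ^ (2 * m + 2) *
      ((r ^ (4 * m + 8) - 1) - ((m : ℝ) + 2) * r ^ (2 * m + 2) * (r ^ 4 - 1)) := by
    have hp : (0 : ℝ) < r ^ (2 * m + 2) := by positivity
    have := mul_nonneg (mul_nonneg (le_of_lt hx4) (le_of_lt hp)) hbr
    linarith
  -- the key identity
  have e1 : 8 * (m + 2) = 8 * m + 16 := by ring
  have e2 : 6 * (m + 2) + 2 = 6 * m + 14 := by ring
  have e3 : 6 * (m + 2) - 2 = 6 * m + 10 := by omega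
  have e4 : 4 * (m + 2) = 4 * m + 8 := by ring
  have e5 : 2 * (m + 2) + 2 = 2 * m + 6 := by ring
  have e6 : 2 * (m + 2) - 2 = 2 * m + 2 := by omega
  rw [e1, e2, e3, e4, e5, e6]
  have key : (↑(m + 2) : ℝ) * r ^ (8 * m + 16) - (2 * (↑(m + 2) : ℝ) - 1) * r ^ (6 * m + 14)
      - (2 * (↑(m + 2) : ℝ) + 1) * r ^ (6 * m + 10) + 6 * (↑(m + 2) : ℝ) * r ^ (4 * m + 8)
      - (2 * (↑(m + 2) : ℝ) + 1) * r ^ (2 * m + 6) - (2 * (↑(m + 2) : ℝ) - 1) * r ^ (2 * m + 2)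
      + (↑(m + 2) : ℝ)
      = ((m : ℝ) + 2) * ((r ^ (2 * m + 6) - 1) * (r ^ (2 * m + 2) - 1)) ^ 2
        + (r ^ 4 - 1) * r ^ (2 * m + 2) *
          ((r ^ (4 * m + 8) - 1) - ((m : ℝ) + 2) * r ^ (2 * m + 2) * (r ^ 4 - 1)) := by
    push_cast
    ring
  rw [key]
  linarith
end

section
/- For every natural number n ≥ 2 and every real number r > 1, one has C(r) = (n−1)r^(8n+4) − n·r^(8n+2) + (n+1)r^(8n) + (4n−2)r^(6n+4) − 12n·r^(6n+2) + (4n+2)r^(6n) + 6n·r^(4n+4) − 6n·r^(4n+2) + 6n·r^(4n) + (4n+2)r^(2n+4) − 12n·r^(2n+2) + (4n−2)r^(2n) + (n+1)r^4 − n·r^2 + (n−1) > 0. -/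
set_option maxHeartbeats 1000000 in
/-- Positivity of `C(r)` for `r > 1`. -/
theorem C_pos (n : ℕ) (hn : 2 ≤ n) (r : ℝ) (hr : 1 < r) :
    0 < ((n : ℝ) - 1) * r ^ (8 * n + 4) - (n : ℝ) * r ^ (8 * n + 2)
      + ((n : ℝ) + 1) * r ^ (8 * n) + (4 * (n : ℝ) - 2) * r ^ (6 * n + 4)
      - 12 * (n : ℝ) * r ^ (6 * n + 2) + (4 * (n : ℝ) + 2) * r ^ (6 * n)
      + 6 * (n : ℝ) * r ^ (4 * n + 4) - 6 * (n : ℝ) * r ^ (4 * n + 2)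
      + 6 * (n : ℝ) * r ^ (4 * n) + (4 * (n : ℝ) + 2) * r ^ (2 * n + 4)
      - 12 * (n : ℝ) * r ^ (2 * n + 2) + (4 * (n : ℝ) - 2) * r ^ (2 * n)
      + ((n : ℝ) + 1) * r ^ 4 - (n : ℝ) * r ^ 2 + ((n : ℝ) - 1) := by
  have hr0 : (0:ℝ) < r := lt_trans one_pos hr
  set t : ℝ := r ^ 2 with ht
  have ht1 : 1 < t := by nlinarith
  set u : ℝ := t ^ n with hu
  have hu1 : 1 < u := one_lt_pow₀ ht1 (by omega)
  -- rewrite all powers of r in terms of t and u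
  have hpow : ∀ a b : ℕ, r ^ (2 * n * a + 2 * b) = u ^ a * t ^ b := by
    intro a b
    rw [pow_add, hu, ht, ← pow_mul, ← pow_mul, ← pow_mul]
    ring_nf
  have h1e : r ^ (8 * n + 4) = u ^ 4 * t ^ 2 := by
    rw [show 8 * n + 4 = 2 * n * 4 + 2 * 2 by ring]; exact hpow 4 2
  have h2e : r ^ (8 * n + 2) = u ^ 4 * t ^ 1 := by
    rw [show 8 * n + 2 = 2 * n * 4 + 2 * 1 by ring]; exact hpow 4 1
  have h3e : r ^ (8 * n) = u ^ 4 * t ^ 0 := by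
    rw [show 8 * n = 2 * n * 4 + 2 * 0 by ring]; exact hpow 4 0
  have h4e : r ^ (6 * n + 4) = u ^ 3 * t ^ 2 := by
    rw [show 6 * n + 4 = 2 * n * 3 + 2 * 2 by ring]; exact hpow 3 2
  have h5e : r ^ (6 * n + 2) = u ^ 3 * t ^ 1 := by
    rw [show 6 * n + 2 = 2 * n * 3 + 2 * 1 by ring]; exact hpow 3 1
  have h6e : r ^ (6 * n) = u ^ 3 * t ^ 0 := by
    rw [show 6 * n = 2 * n * 3 + 2 * 0 by ring]; exact hpow 3 0
  have h7e : r ^ (4 * n + 4) = u ^ 2 * t ^ 2 := by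
    rw [show 4 * n + 4 = 2 * n * 2 + 2 * 2 by ring]; exact hpow 2 2
  have h8e : r ^ (4 * n + 2) = u ^ 2 * t ^ 1 := by
    rw [show 4 * n + 2 = 2 * n * 2 + 2 * 1 by ring]; exact hpow 2 1
  have h9e : r ^ (4 * n) = u ^ 2 * t ^ 0 := by
    rw [show 4 * n = 2 * n * 2 + 2 * 0 by ring]; exact hpow 2 0
  have h10e : r ^ (2 * n + 4) = u ^ 1 * t ^ 2 := by
    rw [show 2 * n + 4 = 2 * n * 1 + 2 * 2 by ring]; exact hpow 1 2
  have h11e : r ^ (2 * n + 2) = u ^ 1 * t ^ 1 := by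
    rw [show 2 * n + 2 = 2 * n * 1 + 2 * 1 by ring]; exact hpow 1 1
  have h12e : r ^ (2 * n) = u ^ 1 * t ^ 0 := by
    rw [show 2 * n = 2 * n * 1 + 2 * 0 by ring]; exact hpow 1 0
  rw [h1e, h2e, h3e, h4e, h5e, h6e, h7e, h8e, h9e, h10e, h11e, h12e]
  -- geometric sums
  set S : ℝ := ∑ i ∈ Finset.range n, t ^ i with hSdef
  set T : ℝ := ∑ i ∈ Finset.range (n - 1), t ^ (i + 1) with hTdef
  have hS : (t - 1) * S = u - 1 := by
    have := geom_sum_mul t n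
    rw [hSdef, hu]
    linarith [this]
  have hST : S = 1 + T := by
    obtain ⟨m, rfl⟩ : ∃ m, n = m + 1 := ⟨n - 1, by omega⟩
    rw [hSdef, hTdef, Finset.sum_range_succ']
    push_cast
    ring
  have hT : (t - 1) * T = u - t := by
    rw [hST] at hS
    linear_combination hS
  set D : ℝ := ∑ k ∈ Finset.range (n - 1), (t ^ (k + 1) - 1) * (t ^ (n - 1 - k) - 1)
    with hDdef
  have hDpos : 0 < D := by
    apply Finset.sum_pos
    · intro k hk
      have hk' : k < n - 1 := Finset.mem_range.mp hk
      have h1 : 1 < t ^ (k + 1) := one_lt_pow₀ ht1 (by omega)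
      have h2 : 1 < t ^ (n - 1 - k) := one_lt_pow₀ ht1 (by omega)
      nlinarith
    · exact Finset.nonempty_range_iff.mpr (by omega)
  have hDeq : D = ((n : ℝ) - 1) * (u + 1) - 2 * T := by
    have hrefl : ∑ k ∈ Finset.range (n - 1), t ^ (n - 1 - k) = T := by
      rw [hTdef]
      rw [← Finset.sum_range_reflect (fun j => t ^ (j + 1)) (n - 1)]
      apply Finset.sum_congr rfl
      intro k hk
      have hk' : k < n - 1 := Finset.mem_range.mp hk
      congr 1
      omega
    have hstep : ∀ k ∈ Finset.range (n - 1),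
        (t ^ (k + 1) - 1) * (t ^ (n - 1 - k) - 1)
          = (u + 1) - t ^ (k + 1) - t ^ (n - 1 - k) := by
      intro k hk
      have hk' : k < n - 1 := Finset.mem_range.mp hk
      have hmul : t ^ (k + 1) * t ^ (n - 1 - k) = u := by
        rw [hu, ← pow_add]
        congr 1
        omega
      nlinarith [hmul]
    rw [hDdef, Finset.sum_congr rfl hstep]
    rw [Finset.sum_sub_distrib, Finset.sum_sub_distrib, hrefl, hTdef,
      Finset.sum_const, Finset.card_range, nsmul_eq_mul]
    have : ((n - 1 : ℕ) : ℝ) = (n : ℝ) - 1 := by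
      rw [Nat.cast_sub (by omega)]
      simp
    rw [this]
    ring
  -- key algebraic identity
  have key : ((n : ℝ) - 1) * (u ^ 4 * t ^ 2) - (n : ℝ) * (u ^ 4 * t ^ 1)
      + ((n : ℝ) + 1) * (u ^ 4 * t ^ 0) + (4 * (n : ℝ) - 2) * (u ^ 3 * t ^ 2)
      - 12 * (n : ℝ) * (u ^ 3 * t ^ 1) + (4 * (n : ℝ) + 2) * (u ^ 3 * t ^ 0)
      + 6 * (n : ℝ) * (u ^ 2 * t ^ 2) - 6 * (n : ℝ) * (u ^ 2 * t ^ 1)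
      + 6 * (n : ℝ) * (u ^ 2 * t ^ 0) + (4 * (n : ℝ) + 2) * (u ^ 1 * t ^ 2)
      - 12 * (n : ℝ) * (u ^ 1 * t ^ 1) + (4 * (n : ℝ) - 2) * (u ^ 1 * t ^ 0)
      + ((n : ℝ) + 1) * t ^ 2 - (n : ℝ) * t ^ 1 + ((n : ℝ) - 1)
      = (t - 1) ^ 2 * (u + 1) ^ 3 * D + (n : ℝ) * t * (t - 1) ^ 4 * S ^ 4 := by
    rw [hDeq]
    linear_combination
      (-((n : ℝ) * t * (((t - 1) * S) ^ 3 + ((t - 1) * S) ^ 2 * (u - 1)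
        + ((t - 1) * S) * (u - 1) ^ 2 + (u - 1) ^ 3))) * hS
      + 2 * (t - 1) * (u + 1) ^ 3 * hT
  rw [show ((n : ℝ) + 1) * r ^ 4 = ((n : ℝ) + 1) * t ^ 2 from by rw [ht]; ring,
    show (n : ℝ) * t = (n : ℝ) * t ^ 1 from by ring]
  rw [key]
  have hS0 : 0 < S := by
    apply Finset.sum_pos
    · intro i _
      positivity
    · exact Finset.nonempty_range_iff.mpr (by omega)
  have htm : (0:ℝ) < t - 1 := by linarith
  have h1 : 0 < (t - 1) ^ 2 * (u + 1) ^ 3 * D :=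
    mul_pos (mul_pos (pow_pos htm 2) (pow_pos (by linarith) 3)) hDpos
  have h2 : 0 < (n : ℝ) * t * (t - 1) ^ 4 * S ^ 4 := by
    have hn0 : (0:ℝ) < n := by exact_mod_cast Nat.pos_of_ne_zero (by omega)
    exact mul_pos (mul_pos (mul_pos hn0 (by linarith)) (pow_pos htm 4)) (pow_pos hS0 4)
  linarith
end

section
/- Let n ≥ 2 be a natural number, let α = (3+√5)/2, and let α_n denote the unique real root of P_{2n}(x) = x^(2n) − x^(n+1) − x^n − x^(n−1) + 1 in the interval (2^(1/n), 3^(1/n)). Then α^(1/n) < α_n. -/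
/-!
Put `y = α_n ^ n`. Dividing `P_{2n}(α_n) = 0` by `y` gives `y + 1/y = α_n + 1 + 1/α_n`, and the
right-hand side exceeds `3` because `α_n ≠ 1`. So `y² - 3y + 1 > 0`; as `y > 1` lies to the right of
the smaller root of `x² - 3x + 1`, this forces `y > α`, i.e. `α_n > α^(1/n)`.
-/

section Field

variable {K : Type*} [Field K]

lemma pow_add_inv_pow_eq_of_root {x : K} {n : ℕ} (hx : x ≠ 0) (hn : n ≠ 0)
    (h : x ^ (2 * n) - x ^ (n + 1) - x ^ n - x ^ (n - 1) + 1 = 0) :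
    x ^ n + (x ^ n)⁻¹ = x + 1 + x⁻¹ := by
  obtain ⟨m, rfl⟩ : ∃ m, n = m + 1 := ⟨n - 1, by omega⟩
  simp only [Nat.add_sub_cancel] at h
  field_simp
  linear_combination x * h

lemma three_lt_add_one_add_inv [LinearOrder K] [IsStrictOrderedRing K] {x : K} (hx : 0 < x)
    (hx1 : x ≠ 1) : 3 < x + 1 + x⁻¹ := by
  have key : x + 1 + x⁻¹ - 3 = (x - 1) ^ 2 / x := by field_simp; ring
  have : 0 < (x - 1) ^ 2 / x := div_pos (sq_pos_of_ne_zero (sub_ne_zero.2 hx1)) hx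
  linarith

end Field

namespace Real

lemma rpow_one_div_natCast_lt_iff {x y : ℝ} {n : ℕ} (hx : 0 ≤ x) (hy : 0 ≤ y) (hn : n ≠ 0) :
    x ^ (1 / (n : ℝ)) < y ↔ x < y ^ n := by
  rw [one_div, rpow_inv_lt_iff_of_pos hx hy (by positivity), rpow_natCast]

lemma three_add_sqrt_five_div_two_lt {y : ℝ} (hy : 1 ≤ y) (h : 3 < y + y⁻¹) :
    (3 + √5) / 2 < y := by
  have hquad : 0 < y ^ 2 - 3 * y + 1 := by
    have : 3 * y < y * (y + y⁻¹) := by nlinarith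
    rw [mul_add, mul_inv_cancel₀ (by positivity)] at this
    nlinarith
  have h5 : √5 ^ 2 = 5 := sq_sqrt (by norm_num)
  have hsqrt5 : 1 < √5 := by nlinarith [sqrt_nonneg 5]
  by_contra! hle
  have : (y - (3 + √5) / 2) * (y - (3 - √5) / 2) ≤ 0 :=
    mul_nonpos_of_nonpos_of_nonneg (by linarith) (by linarith)
  nlinarith

end Real

open Real

/-- If `α_n` is the real root of `P_{2n}` in `(2^{1/n}, 3^{1/n})`, then `α^{1/n} < α_n`
where `α = (3+√5)/2`. -/
theorem alpha_rpow_lt_root (n : ℕ) (hn : 2 ≤ n) (αn : ℝ)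
    (hmem : αn ∈ Set.Ioo ((2 : ℝ) ^ ((1 : ℝ) / (n : ℝ))) ((3 : ℝ) ^ ((1 : ℝ) / (n : ℝ))))
    (hroot : αn ^ (2 * n) - αn ^ (n + 1) - αn ^ n - αn ^ (n - 1) + 1 = 0) :
    ((3 + Real.sqrt 5) / 2) ^ ((1 : ℝ) / (n : ℝ)) < αn := by
  have hn0 : n ≠ 0 := by omega
  have hαn : 1 < αn := (one_lt_rpow (by norm_num) (by positivity)).trans hmem.1
  have hsum : 3 < αn ^ n + (αn ^ n)⁻¹ := by
    rw [pow_add_inv_pow_eq_of_root (by positivity) hn0 hroot]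
    exact three_lt_add_one_add_inv (by positivity) hαn.ne'
  exact (rpow_one_div_natCast_lt_iff (by positivity) (by positivity) hn0).2
    (three_add_sqrt_five_div_two_lt (one_le_pow₀ hαn.le) hsum)
end

section
/- Let n ≥ 2 be a natural number, let α = (3+√5)/2, and let α_{n+1} denote the unique real root of P_{2n+2}(x) = x^(2n+2) − x^(n+2) − x^(n+1) − x^n + 1 in the interval (2^(1/(n+1)), 3^(1/(n+1))). Then α_{n+1} < α^(1/n). -/
/-- If `α_{n+1}` is the real root of `P_{2n+2}` in `(2^{1/(n+1)}, 3^{1/(n+1)})`, then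
`α_{n+1} < α^{1/n}` where `α = (3+√5)/2`. -/
theorem root_lt_alpha_rpow (n : ℕ) (hn : 2 ≤ n) (β : ℝ)
    (hmem : β ∈ Set.Ioo ((2 : ℝ) ^ ((1 : ℝ) / ((n : ℝ) + 1))) ((3 : ℝ) ^ ((1 : ℝ) / ((n : ℝ) + 1))))
    (hroot : β ^ (2 * (n + 1)) - β ^ (n + 2) - β ^ (n + 1) - β ^ n + 1 = 0) :
    β < ((3 + Real.sqrt 5) / 2) ^ ((1 : ℝ) / (n : ℝ)) := by
  obtain ⟨h2, _⟩ := hmem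
  set a : ℝ := (3 + Real.sqrt 5) / 2 with ha
  have hs5 : Real.sqrt 5 ^ 2 = 5 := Real.sq_sqrt (by norm_num)
  have hs5' : (1:ℝ) < Real.sqrt 5 := by
    nlinarith [Real.sqrt_nonneg 5]
  have ha2 : 2 < a := by rw [ha]; linarith
  have haeq : a ^ 2 = 3 * a - 1 := by rw [ha]; nlinarith
  have hnR : (0:ℝ) < (n:ℝ) := by
    have : 0 < n := lt_of_lt_of_le (by norm_num) hn
    exact_mod_cast this
  have hβ1 : 1 < β := by
    refine lt_trans ?_ h2
    exact (Real.one_lt_rpow_iff_of_pos (by norm_num)).2 (Or.inl ⟨by norm_num, by positivity⟩)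
  have hβ0 : 0 < β := lt_trans one_pos hβ1
  set c : ℝ := β ^ n with hc
  have hc1 : 1 < c := one_lt_pow₀ hβ1 (by omega)
  have heq : β^2*c^2 - β^2*c - β*c - c + 1 = 0 := by
    rw [hc]
    have e1 : β ^ (2*(n+1)) = β^2 * (β^n)^2 := by ring
    have e2 : β ^ (n+2) = β^2 * β^n := by ring
    have e3 : β ^ (n+1) = β * β^n := by ring
    linarith [hroot, e1.symm ▸ hroot]
  -- main claim: c < a
  have hca : c < a := by
    by_contra h
    push_neg at h
    have key1 : 0 < (β - 1) * ((2*a - 1)*β + (a - 1)) := by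
      apply mul_pos <;> nlinarith
    have key2 : 0 ≤ (c - a) * (β^2*(c + a) - (β^2 + β + 1)) := by
      apply mul_nonneg (by linarith)
      nlinarith
    nlinarith [key1, key2, haeq, heq]
  -- conclude
  have h1 : (c : ℝ) ^ ((1:ℝ)/(n:ℝ)) < a ^ ((1:ℝ)/(n:ℝ)) :=
    Real.rpow_lt_rpow (by positivity) hca (by positivity)
  rwa [hc, ← Real.rpow_natCast β n, ← Real.rpow_mul hβ0.le, mul_one_div,
    div_self (ne_of_gt hnR), Real.rpow_one] at h1
end

section
/- Let d, a, b be natural numbers with 0 < a < b and 2b < d and d > 7, and let ε₁, ε₂ ∈ {1, −1}. Let P(x) = x^d + ε₁·x^(d−a) + ε₂·x^(d−b) − ε₂·x^b − ε₁·x^a − 1 (an antireciprocal hexanomial of degree d all of whose nonzero coefficients are ±1). Assume P is primitive, i.e. there is no integer k ≥ 2 and polynomial Q with P(x) = Q(x^k). Then there exists a natural number p with 0 < p < d such that the product P(x)·(x^p − 1) has exactly eight nonzero coefficients, each equal to 1 or −1, and is reciprocal: writing D = d + p for its degree, its coefficient of x^i equals its coefficient of x^(D−i) for every 0 ≤ i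 ≤ D. -/
open Polynomial

lemma octa_master (e0 e1 e2 e3 e4 e5 e6 e7 D : ℕ) (c0 c1 c2 c3 c4 c5 c6 c7 : ℤ)
    (R : Polynomial ℤ)
    (hR : R = C c0 * X ^ e0 + C c1 * X ^ e1 + C c2 * X ^ e2 + C c3 * X ^ e3 +
          C c4 * X ^ e4 + C c5 * X ^ e5 + C c6 * X ^ e6 + C c7 * X ^ e7)
    (hc0 : c0 = 1 ∨ c0 = -1)
    (hc1 : c1 = 1 ∨ c1 = -1)
    (hc2 : c2 = 1 ∨ c2 = -1)
    (hc3 : c3 = 1 ∨ c3 = -1)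
    (hc4 : c4 = 1 ∨ c4 = -1)
    (hc5 : c5 = 1 ∨ c5 = -1)
    (hc6 : c6 = 1 ∨ c6 = -1)
    (hc7 : c7 = 1 ∨ c7 = -1)
    (hs07 : e0 + e7 = D) (hs16 : e1 + e6 = D) (hs25 : e2 + e5 = D) (hs34 : e3 + e4 = D)
    (hq07 : c0 = c7) (hq16 : c1 = c6) (hq25 : c2 = c5) (hq34 : c3 = c4)
    (h01 : e0 ≠ e1)
    (h02 : e0 ≠ e2)
    (h03 : e0 ≠ e3)
    (h04 : e0 ≠ e4)
    (h05 : e0 ≠ e5)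
    (h06 : e0 ≠ e6)
    (h07 : e0 ≠ e7)
    (h12 : e1 ≠ e2)
    (h13 : e1 ≠ e3)
    (h14 : e1 ≠ e4)
    (h15 : e1 ≠ e5)
    (h16 : e1 ≠ e6)
    (h17 : e1 ≠ e7)
    (h23 : e2 ≠ e3)
    (h24 : e2 ≠ e4)
    (h25 : e2 ≠ e5)
    (h26 : e2 ≠ e6)
    (h27 : e2 ≠ e7)
    (h34 : e3 ≠ e4)
    (h35 : e3 ≠ e5)
    (h36 : e3 ≠ e6)
    (h37 : e3 ≠ e7)
    (h45 : e4 ≠ e5)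
    (h46 : e4 ≠ e6)
    (h47 : e4 ≠ e7)
    (h56 : e5 ≠ e6)
    (h57 : e5 ≠ e7)
    (h67 : e6 ≠ e7) :
    R.support.card = 8 ∧ (∀ i ∈ R.support, R.coeff i = 1 ∨ R.coeff i = -1) ∧
    (∀ i ≤ D, R.coeff i = R.coeff (D - i)) := by
  have key : ∀ n : ℕ, R.coeff n =
      (if n = e0 then c0 else 0) + (if n = e1 then c1 else 0) + (if n = e2 then c2 else 0) +
      (if n = e3 then c3 else 0) + (if n = e4 then c4 else 0) + (if n = e5 then c5 else 0) +
      (if n = e6 then c6 else 0) + (if n = e7 then c7 else 0) := by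
    intro n
    rw [hR]
    simp [coeff_C_mul, coeff_X_pow]
  have n0 : c0 ≠ 0 := by rcases hc0 with rfl | rfl <;> norm_num
  have n1 : c1 ≠ 0 := by rcases hc1 with rfl | rfl <;> norm_num
  have n2 : c2 ≠ 0 := by rcases hc2 with rfl | rfl <;> norm_num
  have n3 : c3 ≠ 0 := by rcases hc3 with rfl | rfl <;> norm_num
  have n4 : c4 ≠ 0 := by rcases hc4 with rfl | rfl <;> norm_num
  have n5 : c5 ≠ 0 := by rcases hc5 with rfl | rfl <;> norm_num
  have n6 : c6 ≠ 0 := by rcases hc6 with rfl | rfl <;> norm_num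
  have n7 : c7 ≠ 0 := by rcases hc7 with rfl | rfl <;> norm_num
  have v0 : R.coeff e0 = c0 := by rw [key, if_pos rfl, if_neg h01, if_neg h02, if_neg h03, if_neg h04, if_neg h05, if_neg h06, if_neg h07]; ring
  have v1 : R.coeff e1 = c1 := by rw [key, if_neg (Ne.symm h01), if_pos rfl, if_neg h12, if_neg h13, if_neg h14, if_neg h15, if_neg h16, if_neg h17]; ring
  have v2 : R.coeff e2 = c2 := by rw [key, if_neg (Ne.symm h02), if_neg (Ne.symm h12), if_pos rfl, if_neg h23, if_neg h24, if_neg h25, if_neg h26, if_neg h27]; ring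
  have v3 : R.coeff e3 = c3 := by rw [key, if_neg (Ne.symm h03), if_neg (Ne.symm h13), if_neg (Ne.symm h23), if_pos rfl, if_neg h34, if_neg h35, if_neg h36, if_neg h37]; ring
  have v4 : R.coeff e4 = c4 := by rw [key, if_neg (Ne.symm h04), if_neg (Ne.symm h14), if_neg (Ne.symm h24), if_neg (Ne.symm h34), if_pos rfl, if_neg h45, if_neg h46, if_neg h47]; ring
  have v5 : R.coeff e5 = c5 := by rw [key, if_neg (Ne.symm h05), if_neg (Ne.symm h15), if_neg (Ne.symm h25), if_neg (Ne.symm h35), if_neg (Ne.symm h45), if_pos rfl, if_neg h56, if_neg h57]; ring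
  have v6 : R.coeff e6 = c6 := by rw [key, if_neg (Ne.symm h06), if_neg (Ne.symm h16), if_neg (Ne.symm h26), if_neg (Ne.symm h36), if_neg (Ne.symm h46), if_neg (Ne.symm h56), if_pos rfl, if_neg h67]; ring
  have v7 : R.coeff e7 = c7 := by rw [key, if_neg (Ne.symm h07), if_neg (Ne.symm h17), if_neg (Ne.symm h27), if_neg (Ne.symm h37), if_neg (Ne.symm h47), if_neg (Ne.symm h57), if_neg (Ne.symm h67), if_pos rfl]; ring
  have nm0 : e0 ∉ ({e1,e2,e3,e4,e5,e6,e7} : Finset ℕ) := by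
    simp only [Finset.mem_insert, Finset.mem_singleton]
    push_neg
    exact ⟨h01, h02, h03, h04, h05, h06, h07⟩
  have nm1 : e1 ∉ ({e2,e3,e4,e5,e6,e7} : Finset ℕ) := by
    simp only [Finset.mem_insert, Finset.mem_singleton]
    push_neg
    exact ⟨h12, h13, h14, h15, h16, h17⟩
  have nm2 : e2 ∉ ({e3,e4,e5,e6,e7} : Finset ℕ) := by
    simp only [Finset.mem_insert, Finset.mem_singleton]
    push_neg
    exact ⟨h23, h24, h25, h26, h27⟩
  have nm3 : e3 ∉ ({e4,e5,e6,e7} : Finset ℕ) := by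
    simp only [Finset.mem_insert, Finset.mem_singleton]
    push_neg
    exact ⟨h34, h35, h36, h37⟩
  have nm4 : e4 ∉ ({e5,e6,e7} : Finset ℕ) := by
    simp only [Finset.mem_insert, Finset.mem_singleton]
    push_neg
    exact ⟨h45, h46, h47⟩
  have nm5 : e5 ∉ ({e6,e7} : Finset ℕ) := by
    simp only [Finset.mem_insert, Finset.mem_singleton]
    push_neg
    exact ⟨h56, h57⟩
  have nm6 : e6 ∉ ({e7} : Finset ℕ) := by
    simp only [Finset.mem_insert, Finset.mem_singleton]
    push_neg
    exact h67
  have hsup : R.support = {e0, e1, e2, e3, e4, e5, e6, e7} := by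
    ext n
    rw [mem_support_iff]
    simp only [Finset.mem_insert, Finset.mem_singleton]
    constructor
    · intro h
      by_contra hn
      push_neg at hn
      obtain ⟨m0, m1, m2, m3, m4, m5, m6, m7⟩ := hn
      apply h
      rw [key, if_neg m0, if_neg m1, if_neg m2, if_neg m3, if_neg m4, if_neg m5, if_neg m6, if_neg m7]
      norm_num
    · rintro (rfl | rfl | rfl | rfl | rfl | rfl | rfl | rfl)
      · rw [v0]; exact n0
      · rw [v1]; exact n1
      · rw [v2]; exact n2
      · rw [v3]; exact n3
      · rw [v4]; exact n4
      · rw [v5]; exact n5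
      · rw [v6]; exact n6
      · rw [v7]; exact n7
  refine ⟨?_, ?_, ?_⟩
  · rw [hsup, Finset.card_insert_of_notMem nm0, Finset.card_insert_of_notMem nm1,
      Finset.card_insert_of_notMem nm2, Finset.card_insert_of_notMem nm3,
      Finset.card_insert_of_notMem nm4, Finset.card_insert_of_notMem nm5,
      Finset.card_insert_of_notMem nm6, Finset.card_singleton]
  · intro i hi
    rw [hsup] at hi
    simp only [Finset.mem_insert, Finset.mem_singleton] at hi
    rcases hi with rfl | rfl | rfl | rfl | rfl | rfl | rfl | rfl
    · rw [v0]; exact hc0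
    · rw [v1]; exact hc1
    · rw [v2]; exact hc2
    · rw [v3]; exact hc3
    · rw [v4]; exact hc4
    · rw [v5]; exact hc5
    · rw [v6]; exact hc6
    · rw [v7]; exact hc7
  · intro i hi
    by_cases m0 : i = e0
    · rw [m0, show D - e0 = e7 by clear * - hs07; omega, v0, v7]
      exact hq07
    by_cases m1 : i = e1
    · rw [m1, show D - e1 = e6 by clear * - hs16; omega, v1, v6]
      exact hq16
    by_cases m2 : i = e2
    · rw [m2, show D - e2 = e5 by clear * - hs25; omega, v2, v5]
      exact hq25
    by_cases m3 : i = e3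
    · rw [m3, show D - e3 = e4 by clear * - hs34; omega, v3, v4]
      exact hq34
    by_cases m4 : i = e4
    · rw [m4, show D - e4 = e3 by clear * - hs34; omega, v4, v3]
      exact (hq34).symm
    by_cases m5 : i = e5
    · rw [m5, show D - e5 = e2 by clear * - hs25; omega, v5, v2]
      exact (hq25).symm
    by_cases m6 : i = e6
    · rw [m6, show D - e6 = e1 by clear * - hs16; omega, v6, v1]
      exact (hq16).symm
    by_cases m7 : i = e7
    · rw [m7, show D - e7 = e0 by clear * - hs07; omega, v7, v0]
      exact (hq07).symm
    have w0 : D - i ≠ e0 := by clear * - hi m7 hs07; omega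
    have w1 : D - i ≠ e1 := by clear * - hi m6 hs16; omega
    have w2 : D - i ≠ e2 := by clear * - hi m5 hs25; omega
    have w3 : D - i ≠ e3 := by clear * - hi m4 hs34; omega
    have w4 : D - i ≠ e4 := by clear * - hi m3 hs34; omega
    have w5 : D - i ≠ e5 := by clear * - hi m2 hs25; omega
    have w6 : D - i ≠ e6 := by clear * - hi m1 hs16; omega
    have w7 : D - i ≠ e7 := by clear * - hi m0 hs07; omega
    have z1 : R.coeff i = 0 := by rw [key, if_neg m0, if_neg m1, if_neg m2, if_neg m3, if_neg m4, if_neg m5, if_neg m6, if_neg m7]; norm_num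
    have z2 : R.coeff (D - i) = 0 := by rw [key, if_neg w0, if_neg w1, if_neg w2, if_neg w3, if_neg w4, if_neg w5, if_neg w6, if_neg w7]; norm_num
    rw [z1, z2]



lemma prim_dvd (n1 n2 n3 n4 n5 : ℕ) (ε₁ ε₂ : ℤ) (P : Polynomial ℤ)
    (hP : P = X ^ n1 + C ε₁ * X ^ n2 + C ε₂ * X ^ n3 - C ε₂ * X ^ n4 - C ε₁ * X ^ n5 - 1)
    (k : ℕ) (h1 : k ∣ n1) (h2 : k ∣ n2) (h3 : k ∣ n3) (h4 : k ∣ n4) (h5 : k ∣ n5) :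
    ∃ Q : Polynomial ℤ, P = Q.comp (X ^ k) := by
  refine ⟨X ^ (n1 / k) + C ε₁ * X ^ (n2 / k) + C ε₂ * X ^ (n3 / k)
      - C ε₂ * X ^ (n4 / k) - C ε₁ * X ^ (n5 / k) - 1, ?_⟩
  have e1 : k * (n1 / k) = n1 := Nat.mul_div_cancel' h1
  have e2 : k * (n2 / k) = n2 := Nat.mul_div_cancel' h2
  have e3 : k * (n3 / k) = n3 := Nat.mul_div_cancel' h3
  have e4 : k * (n4 / k) = n4 := Nat.mul_div_cancel' h4
  have e5 : k * (n5 / k) = n5 := Nat.mul_div_cancel' h5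
  rw [hP]
  simp only [add_comp, sub_comp, mul_comp, C_comp, pow_comp, X_comp, one_comp,
    ← pow_mul, e1, e2, e3, e4, e5]

/-- Theorem 3: a primitive antireciprocal hexanomial of degree `d > 7` with coefficients
`±1` times a suitable `x^p − 1` (with `0 < p < d`) is a reciprocal octanomial with
coefficients `±1`. -/
theorem antireciprocal_hexanomial_mul_eq_reciprocal_octanomial
    (d a b : ℕ) (ha : 0 < a) (hab : a < b) (hbd : 2 * b < d) (hd : 7 < d)
    (ε₁ ε₂ : ℤ) (hε₁ : ε₁ = 1 ∨ ε₁ = -1) (hε₂ : ε₂ = 1 ∨ ε₂ = -1)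
    (P : Polynomial ℤ)
    (hP : P = X ^ d + C ε₁ * X ^ (d - a) + C ε₂ * X ^ (d - b)
            - C ε₂ * X ^ b - C ε₁ * X ^ a - 1)
    (hprim : ¬ ∃ k : ℕ, 2 ≤ k ∧ ∃ Q : Polynomial ℤ, P = Q.comp (X ^ k)) :
    ∃ p : ℕ, 0 < p ∧ p < d ∧
      (P * (X ^ p - 1)).support.card = 8 ∧
      (∀ i ∈ (P * (X ^ p - 1)).support,
        (P * (X ^ p - 1)).coeff i = 1 ∨ (P * (X ^ p - 1)).coeff i = -1) ∧
      (∀ i ≤ d + p, (P * (X ^ p - 1)).coeff i = (P * (X ^ p - 1)).coeff (d + p - i)) := by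
  obtain ⟨s, t, hb2, hd2, hs1, ht1⟩ :
      ∃ s t, b = a + s ∧ d = 2 * a + 2 * s + t ∧ 1 ≤ s ∧ 1 ≤ t :=
    ⟨b - a, d - 2 * b, by omega, by omega, by omega, by omega⟩
  subst hb2
  subst hd2
  rw [show 2 * a + 2 * s + t - a = a + 2 * s + t from by omega,
    show 2 * a + 2 * s + t - (a + s) = a + s + t from by omega] at hP
  have hkey : ∀ k : ℕ, 2 ≤ k → k ∣ a → k ∣ (a + s) → k ∣ (2 * a + 2 * s + t) → False := by
    intro k hk hka hkb hkd
    refine hprim ⟨k, hk, ?_⟩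
    have h2 : k ∣ a + 2 * s + t := by
      have h := Nat.dvd_sub hkd hka
      rwa [show 2 * a + 2 * s + t - a = a + 2 * s + t from by omega] at h
    have h3 : k ∣ a + s + t := by
      have h := Nat.dvd_sub hkd hkb
      rwa [show 2 * a + 2 * s + t - (a + s) = a + s + t from by omega] at h
    exact prim_dvd _ _ _ _ _ ε₁ ε₂ P hP k hkd h2 h3 hkb hka
  rcases hε₁ with rfl | rfl
  · -- ε₁ = 1
    rcases hε₂ with rfl | rfl
    · -- ε₁ = 1, ε₂ = 1
      by_cases hE : a = s + t ∨ t = a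
      · have hsa : s ≠ a := by
          intro h
          rcases hE with h1 | h1
          · omega
          · exact hkey a (by omega) (dvd_refl a) ⟨2, by omega⟩ ⟨5, by omega⟩
        have hst : s ≠ t := by
          intro h
          rcases hE with h1 | h1
          · exact hkey s (by omega) ⟨2, by omega⟩ ⟨3, by omega⟩ ⟨7, by omega⟩
          · exact hsa (by omega)
        -- Case E: p = s
        have H := octa_master (0) (a) (s) (a+2*s) (a+s+t) (2*a+2*s+t) (a+3*s+t) (2*a+3*s+t) (2*a+2*s+t + (s))
          1 1 (-1) (-1) (-1) (-1) 1 1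
          (P * (X ^ (s) - 1))
          (by rw [hP]; simp only [map_neg, map_one]; ring)
          (Or.inl rfl) (Or.inl rfl) (Or.inr rfl) (Or.inr rfl) (Or.inr rfl) (Or.inr rfl) (Or.inl rfl) (Or.inl rfl)
          (by omega) (by omega) (by omega) (by omega)
          rfl rfl rfl rfl
          (by omega) (by omega) (by omega) (by omega) (by omega) (by omega) (by omega) (by omega) (by omega) (by omega) (by omega) (by omega) (by omega) (by omega) (by omega) (by omega) (by omega) (by omega) (by omega) (by omega) (by omega) (by omega) (by omega) (by omega) (by omega) (by omega) (by omega) (by omega)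
        exact ⟨s, by omega, by omega, H.1, H.2.1, H.2.2⟩
      by_cases hF : t = a + s
      · have hsa : s ≠ a := by
          intro h
          exact hkey a (by omega) (dvd_refl a) ⟨2, by omega⟩ ⟨6, by omega⟩
        -- Case F: p = a
        have H := octa_master (0) (a+s) (2*a) (2*a+s) (a+s+t) (a+2*s+t) (2*a+s+t) (3*a+2*s+t) (2*a+2*s+t + (a))
          1 1 (-1) (-1) (-1) (-1) 1 1
          (P * (X ^ (a) - 1))
          (by rw [hP]; simp only [map_neg, map_one]; ring)
          (Or.inl rfl) (Or.inl rfl) (Or.inr rfl) (Or.inr rfl) (Or.inr rfl) (Or.inr rfl) (Or.inl rfl) (Or.inl rfl)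
          (by omega) (by omega) (by omega) (by omega)
          rfl rfl rfl rfl
          (by omega) (by omega) (by omega) (by omega) (by omega) (by omega) (by omega) (by omega) (by omega) (by omega) (by omega) (by omega) (by omega) (by omega) (by omega) (by omega) (by omega) (by omega) (by omega) (by omega) (by omega) (by omega) (by omega) (by omega) (by omega) (by omega) (by omega) (by omega)
        exact ⟨a, by omega, by omega, H.1, H.2.1, H.2.2⟩
      ·
        -- Case G: p = a+s
        have H := octa_master (0) (a) (2*a+s) (2*a+2*s) (a+s+t) (a+2*s+t) (2*a+3*s+t) (3*a+3*s+t) (2*a+2*s+t + (a+s))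
          1 1 (-1) (-1) (-1) (-1) 1 1
          (P * (X ^ (a+s) - 1))
          (by rw [hP]; simp only [map_neg, map_one]; ring)
          (Or.inl rfl) (Or.inl rfl) (Or.inr rfl) (Or.inr rfl) (Or.inr rfl) (Or.inr rfl) (Or.inl rfl) (Or.inl rfl)
          (by omega) (by omega) (by omega) (by omega)
          rfl rfl rfl rfl
          (by omega) (by omega) (by omega) (by omega) (by omega) (by omega) (by omega) (by omega) (by omega) (by omega) (by omega) (by omega) (by omega) (by omega) (by omega) (by omega) (by omega) (by omega) (by omega) (by omega) (by omega) (by omega) (by omega) (by omega) (by omega) (by omega) (by omega) (by omega)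
        exact ⟨a+s, by omega, by omega, H.1, H.2.1, H.2.2⟩
    · -- ε₁ = 1, ε₂ = -1
      by_cases hsa : s = a
      · have hta : t ≠ a := by
          intro h
          exact hkey a (by omega) (dvd_refl a) ⟨2, by omega⟩ ⟨5, by omega⟩
        -- Case D: p = s+t
        have H := octa_master (0) (a) (a+s) (s+t) (2*a+2*s+t) (a+2*s+2*t) (a+3*s+2*t) (2*a+3*s+2*t) (2*a+2*s+t + (s+t))
          1 1 (-1) (-1) (-1) (-1) 1 1
          (P * (X ^ (s+t) - 1))
          (by rw [hP]; simp only [map_neg, map_one]; ring)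
          (Or.inl rfl) (Or.inl rfl) (Or.inr rfl) (Or.inr rfl) (Or.inr rfl) (Or.inr rfl) (Or.inl rfl) (Or.inl rfl)
          (by omega) (by omega) (by omega) (by omega)
          rfl rfl rfl rfl
          (by omega) (by omega) (by omega) (by omega) (by omega) (by omega) (by omega) (by omega) (by omega) (by omega) (by omega) (by omega) (by omega) (by omega) (by omega) (by omega) (by omega) (by omega) (by omega) (by omega) (by omega) (by omega) (by omega) (by omega) (by omega) (by omega) (by omega) (by omega)
        exact ⟨s+t, by omega, by omega, H.1, H.2.1, H.2.2⟩
      ·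
        -- Case C: p = a+s+t
        have H := octa_master (0) (a) (a+s) (a+2*s+t) (2*a+s+t) (2*a+2*s+2*t) (2*a+3*s+2*t) (3*a+3*s+2*t) (2*a+2*s+t + (a+s+t))
          1 1 (-1) (-1) (-1) (-1) 1 1
          (P * (X ^ (a+s+t) - 1))
          (by rw [hP]; simp only [map_neg, map_one]; ring)
          (Or.inl rfl) (Or.inl rfl) (Or.inr rfl) (Or.inr rfl) (Or.inr rfl) (Or.inr rfl) (Or.inl rfl) (Or.inl rfl)
          (by omega) (by omega) (by omega) (by omega)
          rfl rfl rfl rfl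
          (by omega) (by omega) (by omega) (by omega) (by omega) (by omega) (by omega) (by omega) (by omega) (by omega) (by omega) (by omega) (by omega) (by omega) (by omega) (by omega) (by omega) (by omega) (by omega) (by omega) (by omega) (by omega) (by omega) (by omega) (by omega) (by omega) (by omega) (by omega)
        exact ⟨a+s+t, by omega, by omega, H.1, H.2.1, H.2.2⟩
  · -- ε₁ = -1
    rcases hε₂ with rfl | rfl
    ·
        -- Case A: p = a+2*s+t
        have H := octa_master (0) (a) (a+s) (a+s+t) (2*a+3*s+t) (2*a+3*s+2*t) (2*a+4*s+2*t) (3*a+4*s+2*t) (2*a+2*s+t + (a+2*s+t))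
          1 (-1) 1 (-1) (-1) 1 (-1) 1
          (P * (X ^ (a+2*s+t) - 1))
          (by rw [hP]; simp only [map_neg, map_one]; ring)
          (Or.inl rfl) (Or.inr rfl) (Or.inl rfl) (Or.inr rfl) (Or.inr rfl) (Or.inl rfl) (Or.inr rfl) (Or.inl rfl)
          (by omega) (by omega) (by omega) (by omega)
          rfl rfl rfl rfl
          (by omega) (by omega) (by omega) (by omega) (by omega) (by omega) (by omega) (by omega) (by omega) (by omega) (by omega) (by omega) (by omega) (by omega) (by omega) (by omega) (by omega) (by omega) (by omega) (by omega) (by omega) (by omega) (by omega) (by omega) (by omega) (by omega) (by omega) (by omega)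
        exact ⟨a+2*s+t, by omega, by omega, H.1, H.2.1, H.2.2⟩
    ·
        -- Case B: p = a+2*s+t
        have H := octa_master (0) (a) (a+s) (a+s+t) (2*a+3*s+t) (2*a+3*s+2*t) (2*a+4*s+2*t) (3*a+4*s+2*t) (2*a+2*s+t + (a+2*s+t))
          1 (-1) (-1) 1 1 (-1) (-1) 1
          (P * (X ^ (a+2*s+t) - 1))
          (by rw [hP]; simp only [map_neg, map_one]; ring)
          (Or.inl rfl) (Or.inr rfl) (Or.inr rfl) (Or.inl rfl) (Or.inl rfl) (Or.inr rfl) (Or.inr rfl) (Or.inl rfl)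
          (by omega) (by omega) (by omega) (by omega)
          rfl rfl rfl rfl
          (by omega) (by omega) (by omega) (by omega) (by omega) (by omega) (by omega) (by omega) (by omega) (by omega) (by omega) (by omega) (by omega) (by omega) (by omega) (by omega) (by omega) (by omega) (by omega) (by omega) (by omega) (by omega) (by omega) (by omega) (by omega) (by omega) (by omega) (by omega)
        exact ⟨a+2*s+t, by omega, by omega, H.1, H.2.1, H.2.2⟩
end

section
/- Let d, a, b be natural numbers with 0 < a < b and 2b < d, and let ε ∈ {1, −1}. Then (x^d − x^(d−a) + ε·x^(d−b) − ε·x^b + x^a − 1)·(x^(d−a) − 1) = x^(2d−a) − x^(2d−2a) + ε·x^(2d−a−b) − ε·x^(d+b−a) − ε·x^(d−b) + ε·x^b − x^a + 1; moreover this product has exactly eight nonzero coefficients, each equal to 1 or −1, and is reciprocal of degree 2d−a: its coefficient of x^i equals its coefficient of x^(2d−a−i) for every 0 ≤ i ≤ 2d−a. -/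
open Polynomial

theorem octo_main (ε : ℤ) (hε : ε = 1 ∨ ε = -1)
    (g1 g2 g3 g4 g5 g6 g7 : ℕ)
    (h01 : 0 < g1) (h12 : g1 < g2) (h23 : g2 < g3) (h34 : g3 < g4)
    (h45 : g4 < g5) (h56 : g5 < g6) (h67 : g6 < g7)
    (s16 : g1 + g6 = g7) (s25 : g2 + g5 = g7) (s34 : g3 + g4 = g7) :
    (X^g7 - X^g6 + C ε * X^g5 - C ε * X^g4 - C ε * X^g3 + C ε * X^g2 - X^g1 + 1
      : Polynomial ℤ).support.card = 8 ∧
    (∀ i ∈ (X^g7 - X^g6 + C ε * X^g5 - C ε * X^g4 - C ε * X^g3 + C ε * X^g2 - X^g1 + 1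
      : Polynomial ℤ).support,
      (X^g7 - X^g6 + C ε * X^g5 - C ε * X^g4 - C ε * X^g3 + C ε * X^g2 - X^g1 + 1
        : Polynomial ℤ).coeff i = 1 ∨
      (X^g7 - X^g6 + C ε * X^g5 - C ε * X^g4 - C ε * X^g3 + C ε * X^g2 - X^g1 + 1
        : Polynomial ℤ).coeff i = -1) ∧
    (∀ i ≤ g7,
      (X^g7 - X^g6 + C ε * X^g5 - C ε * X^g4 - C ε * X^g3 + C ε * X^g2 - X^g1 + 1
        : Polynomial ℤ).coeff i =
      (X^g7 - X^g6 + C ε * X^g5 - C ε * X^g4 - C ε * X^g3 + C ε * X^g2 - X^g1 + 1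
        : Polynomial ℤ).coeff (g7 - i)) := by
  set P : Polynomial ℤ :=
    X^g7 - X^g6 + C ε * X^g5 - C ε * X^g4 - C ε * X^g3 + C ε * X^g2 - X^g1 + 1 with hP
  have hc : ∀ i, P.coeff i
      = (if i = g7 then 1 else 0) - (if i = g6 then 1 else 0)
      + (if i = g5 then ε else 0) - (if i = g4 then ε else 0)
      - (if i = g3 then ε else 0) + (if i = g2 then ε else 0)
      - (if i = g1 then 1 else 0) + (if i = 0 then 1 else 0) := by
    intro i
    rw [hP]
    simp [coeff_sub, coeff_add, coeff_C_mul, coeff_X_pow, coeff_one, eq_comm, mul_ite]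
  have ite_ne : ∀ (u v : ℕ) (x : ℤ), u ≠ v → (if u = v then x else 0) = 0 :=
    fun u v x h => if_neg h
  have c0 : P.coeff 0 = 1 := by
    rw [hc, ite_ne 0 g7 1 (by omega), ite_ne 0 g6 1 (by omega), ite_ne 0 g5 ε (by omega),
      ite_ne 0 g4 ε (by omega), ite_ne 0 g3 ε (by omega), ite_ne 0 g2 ε (by omega),
      ite_ne 0 g1 1 (by omega), if_pos rfl]
    ring
  have c1 : P.coeff g1 = -1 := by
    rw [hc, ite_ne g1 g7 1 (by omega), ite_ne g1 g6 1 (by omega), ite_ne g1 g5 ε (by omega),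
      ite_ne g1 g4 ε (by omega), ite_ne g1 g3 ε (by omega), ite_ne g1 g2 ε (by omega),
      if_pos rfl, ite_ne g1 0 1 (by omega)]
    ring
  have c2 : P.coeff g2 = ε := by
    rw [hc, ite_ne g2 g7 1 (by omega), ite_ne g2 g6 1 (by omega), ite_ne g2 g5 ε (by omega),
      ite_ne g2 g4 ε (by omega), ite_ne g2 g3 ε (by omega), if_pos rfl,
      ite_ne g2 g1 1 (by omega), ite_ne g2 0 1 (by omega)]
    ring
  have c3 : P.coeff g3 = -ε := by
    rw [hc, ite_ne g3 g7 1 (by omega), ite_ne g3 g6 1 (by omega), ite_ne g3 g5 ε (by omega),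
      ite_ne g3 g4 ε (by omega), if_pos rfl, ite_ne g3 g2 ε (by omega),
      ite_ne g3 g1 1 (by omega), ite_ne g3 0 1 (by omega)]
    ring
  have c4 : P.coeff g4 = -ε := by
    rw [hc, ite_ne g4 g7 1 (by omega), ite_ne g4 g6 1 (by omega), ite_ne g4 g5 ε (by omega),
      if_pos rfl, ite_ne g4 g3 ε (by omega), ite_ne g4 g2 ε (by omega),
      ite_ne g4 g1 1 (by omega), ite_ne g4 0 1 (by omega)]
    ring
  have c5 : P.coeff g5 = ε := by
    rw [hc, ite_ne g5 g7 1 (by omega), ite_ne g5 g6 1 (by omega), if_pos rfl,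
      ite_ne g5 g4 ε (by omega), ite_ne g5 g3 ε (by omega), ite_ne g5 g2 ε (by omega),
      ite_ne g5 g1 1 (by omega), ite_ne g5 0 1 (by omega)]
    ring
  have c6 : P.coeff g6 = -1 := by
    rw [hc, ite_ne g6 g7 1 (by omega), if_pos rfl, ite_ne g6 g5 ε (by omega),
      ite_ne g6 g4 ε (by omega), ite_ne g6 g3 ε (by omega), ite_ne g6 g2 ε (by omega),
      ite_ne g6 g1 1 (by omega), ite_ne g6 0 1 (by omega)]
    ring
  have c7 : P.coeff g7 = 1 := by
    rw [hc, if_pos rfl, ite_ne g7 g6 1 (by omega), ite_ne g7 g5 ε (by omega),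
      ite_ne g7 g4 ε (by omega), ite_ne g7 g3 ε (by omega), ite_ne g7 g2 ε (by omega),
      ite_ne g7 g1 1 (by omega), ite_ne g7 0 1 (by omega)]
    ring
  have cz : ∀ i, i ≠ 0 → i ≠ g1 → i ≠ g2 → i ≠ g3 → i ≠ g4 → i ≠ g5 → i ≠ g6 → i ≠ g7 →
      P.coeff i = 0 := by
    intro i n0 n1 n2 n3 n4 n5 n6 n7
    rw [hc, ite_ne i g7 1 n7, ite_ne i g6 1 n6, ite_ne i g5 ε n5, ite_ne i g4 ε n4,
      ite_ne i g3 ε n3, ite_ne i g2 ε n2, ite_ne i g1 1 n1, ite_ne i 0 1 n0]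
    ring
  have hεne : ε ≠ 0 := by rcases hε with rfl | rfl <;> norm_num
  have hsupp : P.support = ({0, g1, g2, g3, g4, g5, g6, g7} : Finset ℕ) := by
    ext i
    simp only [mem_support_iff, Finset.mem_insert, Finset.mem_singleton]
    constructor
    · intro h
      by_contra hcon
      push_neg at hcon
      obtain ⟨n0, n1, n2, n3, n4, n5, n6, n7⟩ := hcon
      exact h (cz i n0 n1 n2 n3 n4 n5 n6 n7)
    · rintro (rfl | rfl | rfl | rfl | rfl | rfl | rfl | rfl) <;>
        simp [c0, c1, c2, c3, c4, c5, c6, c7, hεne]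
  refine ⟨?_, ?_, ?_⟩
  · rw [hsupp]
    rw [Finset.card_insert_of_notMem (by simp; omega),
        Finset.card_insert_of_notMem (by simp; omega),
        Finset.card_insert_of_notMem (by simp; omega),
        Finset.card_insert_of_notMem (by simp; omega),
        Finset.card_insert_of_notMem (by simp; omega),
        Finset.card_insert_of_notMem (by simp; omega),
        Finset.card_insert_of_notMem (by simp; omega),
        Finset.card_singleton]
  · intro i hi
    rw [hsupp] at hi
    simp only [Finset.mem_insert, Finset.mem_singleton] at hi
    rcases hε with rfl | rfl <;>
      rcases hi with rfl | rfl | rfl | rfl | rfl | rfl | rfl | rfl <;>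
        simp [c0, c1, c2, c3, c4, c5, c6, c7]
  · intro i hi
    rcases eq_or_ne i 0 with rfl | n0
    · rw [Nat.sub_zero, c0, c7]
    rcases eq_or_ne i g1 with h | n1
    · rw [h, show g7 - g1 = g6 by omega, c1, c6]
    rcases eq_or_ne i g2 with h | n2
    · rw [h, show g7 - g2 = g5 by omega, c2, c5]
    rcases eq_or_ne i g3 with h | n3
    · rw [h, show g7 - g3 = g4 by omega, c3, c4]
    rcases eq_or_ne i g4 with h | n4
    · rw [h, show g7 - g4 = g3 by omega, c4, c3]
    rcases eq_or_ne i g5 with h | n5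
    · rw [h, show g7 - g5 = g2 by omega, c5, c2]
    rcases eq_or_ne i g6 with h | n6
    · rw [h, show g7 - g6 = g1 by omega, c6, c1]
    rcases eq_or_ne i g7 with h | n7
    · rw [h, Nat.sub_self, c7, c0]
    · rw [cz i n0 n1 n2 n3 n4 n5 n6 n7,
          cz (g7 - i) (by omega) (by omega) (by omega) (by omega) (by omega)
            (by omega) (by omega) (by omega)]

/-- Case `P₁`: `(x^d − x^{d−a} + ε x^{d−b} − ε x^b + x^a − 1)(x^{d−a} − 1)` equals the
reciprocal octanomial
`x^{2d−a} − x^{2d−2a} + ε x^{2d−a−b} − ε x^{d+b−a} − ε x^{d−b} + ε x^b − x^a + 1`. -/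
theorem hexanomial_case1_product
    (d a b : ℕ) (ha : 0 < a) (hab : a < b) (hbd : 2 * b < d)
    (ε : ℤ) (hε : ε = 1 ∨ ε = -1) :
    ((X ^ d - X ^ (d - a) + C ε * X ^ (d - b) - C ε * X ^ b + X ^ a - 1)
        * (X ^ (d - a) - 1) : Polynomial ℤ)
      = X ^ (2 * d - a) - X ^ (2 * d - 2 * a) + C ε * X ^ (2 * d - a - b)
        - C ε * X ^ (d + b - a) - C ε * X ^ (d - b) + C ε * X ^ b - X ^ a + 1 ∧
    ((X ^ d - X ^ (d - a) + C ε * X ^ (d - b) - C ε * X ^ b + X ^ a - 1)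
        * (X ^ (d - a) - 1) : Polynomial ℤ).support.card = 8 ∧
    (∀ i ∈ ((X ^ d - X ^ (d - a) + C ε * X ^ (d - b) - C ε * X ^ b + X ^ a - 1)
        * (X ^ (d - a) - 1) : Polynomial ℤ).support,
      ((X ^ d - X ^ (d - a) + C ε * X ^ (d - b) - C ε * X ^ b + X ^ a - 1)
        * (X ^ (d - a) - 1) : Polynomial ℤ).coeff i = 1 ∨
      ((X ^ d - X ^ (d - a) + C ε * X ^ (d - b) - C ε * X ^ b + X ^ a - 1)
        * (X ^ (d - a) - 1) : Polynomial ℤ).coeff i = -1) ∧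
    (∀ i ≤ 2 * d - a,
      ((X ^ d - X ^ (d - a) + C ε * X ^ (d - b) - C ε * X ^ b + X ^ a - 1)
        * (X ^ (d - a) - 1) : Polynomial ℤ).coeff i =
      ((X ^ d - X ^ (d - a) + C ε * X ^ (d - b) - C ε * X ^ b + X ^ a - 1)
        * (X ^ (d - a) - 1) : Polynomial ℤ).coeff (2 * d - a - i)) := by
  obtain ⟨m, hm, rfl⟩ : ∃ m, 0 < m ∧ b = a + m := ⟨b - a, by omega, by omega⟩
  obtain ⟨t, ht, rfl⟩ : ∃ t, 0 < t ∧ d = 2 * a + 2 * m + t :=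
    ⟨d - 2 * a - 2 * m, by omega, by omega⟩
  have e1 : 2 * a + 2 * m + t - a = a + 2 * m + t := by omega
  have e2 : 2 * a + 2 * m + t - (a + m) = a + m + t := by omega
  have e3 : 2 * (2 * a + 2 * m + t) - a = 3 * a + 4 * m + 2 * t := by omega
  have e4 : 2 * (2 * a + 2 * m + t) - 2 * a = 2 * a + 4 * m + 2 * t := by omega
  have e5 : 2 * (2 * a + 2 * m + t) - a - (a + m) = 2 * a + 3 * m + 2 * t := by omega
  have e6 : 2 * a + 2 * m + t + (a + m) - a = 2 * a + 3 * m + t := by omega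
  have e7 : 3 * a + 4 * m + 2 * t - (a + m) = 2 * a + 3 * m + 2 * t := by omega
  simp only [e1, e2, e3, e4, e5, e6, e7]
  have hprod :
      ((X ^ (2 * a + 2 * m + t) - X ^ (a + 2 * m + t) + C ε * X ^ (a + m + t)
          - C ε * X ^ (a + m) + X ^ a - 1) * (X ^ (a + 2 * m + t) - 1) : Polynomial ℤ)
      = X ^ (3 * a + 4 * m + 2 * t) - X ^ (2 * a + 4 * m + 2 * t)
        + C ε * X ^ (2 * a + 3 * m + 2 * t) - C ε * X ^ (2 * a + 3 * m + t)
        - C ε * X ^ (a + m + t) + C ε * X ^ (a + m) - X ^ a + 1 := by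
    ring
  rw [hprod]
  exact ⟨rfl, octo_main ε hε a (a + m) (a + m + t) (2 * a + 3 * m + t) (2 * a + 3 * m + 2 * t)
    (2 * a + 4 * m + 2 * t) (3 * a + 4 * m + 2 * t) (by omega) (by omega) (by omega) (by omega)
    (by omega) (by omega) (by omega) (by omega) (by omega) (by omega)⟩
end

section
/- Let d, a, b be natural numbers with 0 < a < b and 2b < d, and assume d ≠ 2a + b, d ≠ a + 2b, and d ≠ 3b. Then (x^d + x^(d−a) + x^(d−b) − x^b − x^a − 1)·(x^b − 1) = x^(d+b) + x^(d+b−a) − x^(2b) − x^(a+b) − x^(d−a) − x^(d−b) + x^a + 1; moreover this product has exactly eight nonzero coefficients, each equal to 1 or −1, and is reciprocal of degree d+b: its coefficient of x^i equals its coefficient of x^(d+b−i) for every 0 ≤ i ≤ d+b. -/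
open Polynomial

set_option maxHeartbeats 2000000 in

/-- Case `P₃`: under `d ≠ 2a+b`, `d ≠ a+2b`, `d ≠ 3b`, the product
`(x^d + x^{d−a} + x^{d−b} − x^b − x^a − 1)(x^b − 1)` equals the reciprocal octanomial
`x^{d+b} + x^{d+b−a} − x^{2b} − x^{a+b} − x^{d−a} − x^{d−b} + x^a + 1`. -/
theorem hexanomial_case3_product
    (d a b : ℕ) (ha : 0 < a) (hab : a < b) (hbd : 2 * b < d)
    (h1 : d ≠ 2 * a + b) (h2 : d ≠ a + 2 * b) (h3 : d ≠ 3 * b) :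
    ((X ^ d + X ^ (d - a) + X ^ (d - b) - X ^ b - X ^ a - 1) * (X ^ b - 1) : Polynomial ℤ)
      = X ^ (d + b) + X ^ (d + b - a) - X ^ (2 * b) - X ^ (a + b)
        - X ^ (d - a) - X ^ (d - b) + X ^ a + 1 ∧
    ((X ^ d + X ^ (d - a) + X ^ (d - b) - X ^ b - X ^ a - 1) * (X ^ b - 1)
        : Polynomial ℤ).support.card = 8 ∧
    (∀ i ∈ ((X ^ d + X ^ (d - a) + X ^ (d - b) - X ^ b - X ^ a - 1) * (X ^ b - 1)
        : Polynomial ℤ).support,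
      ((X ^ d + X ^ (d - a) + X ^ (d - b) - X ^ b - X ^ a - 1) * (X ^ b - 1)
        : Polynomial ℤ).coeff i = 1 ∨
      ((X ^ d + X ^ (d - a) + X ^ (d - b) - X ^ b - X ^ a - 1) * (X ^ b - 1)
        : Polynomial ℤ).coeff i = -1) ∧
    (∀ i ≤ d + b,
      ((X ^ d + X ^ (d - a) + X ^ (d - b) - X ^ b - X ^ a - 1) * (X ^ b - 1)
        : Polynomial ℤ).coeff i =
      ((X ^ d + X ^ (d - a) + X ^ (d - b) - X ^ b - X ^ a - 1) * (X ^ b - 1)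
        : Polynomial ℤ).coeff (d + b - i)) := by
  have hP : ((X ^ d + X ^ (d - a) + X ^ (d - b) - X ^ b - X ^ a - 1) * (X ^ b - 1) : Polynomial ℤ)
      = X ^ (d + b) + X ^ (d + b - a) - X ^ (2 * b) - X ^ (a + b)
        - X ^ (d - a) - X ^ (d - b) + X ^ a + 1 := by
    rw [show (X:Polynomial ℤ) ^ (d + b) = X ^ (d - b) * X ^ b * X ^ b from by
          rw [← pow_add, ← pow_add]; congr 1; omega,
        show (X:Polynomial ℤ) ^ (d + b - a) = X ^ (d - a) * X ^ b from by
          rw [← pow_add]; congr 1; omega,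
        show (X:Polynomial ℤ) ^ (2 * b) = X ^ b * X ^ b from by
          rw [← pow_add]; congr 1; omega,
        show (X:Polynomial ℤ) ^ (a + b) = X ^ a * X ^ b from by
          rw [← pow_add],
        show (X:Polynomial ℤ) ^ d = X ^ (d - b) * X ^ b from by
          rw [← pow_add]; congr 1; omega]
    ring
  rw [hP]
  have hc : ∀ i, (X ^ (d + b) + X ^ (d + b - a) - X ^ (2 * b) - X ^ (a + b)
        - X ^ (d - a) - X ^ (d - b) + X ^ a + 1 : Polynomial ℤ).coeff i
      = (if i = d + b then 1 else 0) + (if i = d + b - a then 1 else 0)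
        - (if i = 2 * b then 1 else 0) - (if i = a + b then 1 else 0)
        - (if i = d - a then 1 else 0) - (if i = d - b then 1 else 0)
        + (if i = a then 1 else 0) + (if i = 0 then 1 else 0) := by
    intro i
    simp [coeff_X_pow, coeff_one]
  refine ⟨rfl, ?_, ?_, ?_⟩
  · have hs : (X ^ (d + b) + X ^ (d + b - a) - X ^ (2 * b) - X ^ (a + b)
        - X ^ (d - a) - X ^ (d - b) + X ^ a + 1 : Polynomial ℤ).support
        = {d + b, d + b - a, 2 * b, a + b, d - a, d - b, a, 0} := by
      ext i
      simp only [mem_support_iff, hc, Finset.mem_insert, Finset.mem_singleton]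
      split_ifs <;> omega
    rw [hs]
    rw [Finset.card_insert_of_notMem (by simp; omega),
        Finset.card_insert_of_notMem (by simp; omega),
        Finset.card_insert_of_notMem (by simp; omega),
        Finset.card_insert_of_notMem (by simp; omega),
        Finset.card_insert_of_notMem (by simp; omega),
        Finset.card_insert_of_notMem (by simp; omega),
        Finset.card_insert_of_notMem (by simp; omega),
        Finset.card_singleton]
  · intro i hi
    rw [mem_support_iff, hc] at hi
    rw [hc]
    split_ifs at hi ⊢ <;> omega
  · intro i hile
    rw [hc i, hc (d + b - i)]
    simp only [show (i = d + b) ↔ (d + b - i = 0) from by omega,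
      show (i = d + b - a) ↔ (d + b - i = a) from by omega,
      show (i = 2 * b) ↔ (d + b - i = d - b) from by omega,
      show (i = a + b) ↔ (d + b - i = d - a) from by omega,
      show (i = d - a) ↔ (d + b - i = a + b) from by omega,
      show (i = d - b) ↔ (d + b - i = 2 * b) from by omega,
      show (i = a) ↔ (d + b - i = d + b - a) from by omega,
      show (i = 0) ↔ (d + b - i = d + b) from by omega]
    ring
end
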